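/- arXiv:1702.05466 — 8 statements merged into one kernel-verified Lean document; each statement's English description precedes it below -/
import Mathlib

section
/- For every integer r ≥ 2 there exists a natural number N such that every finite set X of at least N points in ℝ^2 contains r pairwise disjoint subsets X_1, …, X_r with |X_1| = |X_2| = 2 and |X_i| = 3 for all 3 ≤ i ≤ r, such that conv X_1 ∩ ⋯ ∩ conv X_r ≠ ∅. In other words, the r-tuple (1, 1, 2, …, 2) is affinely Tverberg prescribable for r and d = 2. -/
/-!
Any five points in the plane contain two disjoint pairs whose segments meet: either three of them
are collinear, or (Esther Klein) four of them are in convex position and Radon's theorem splits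
them into two crossing diagonals. Double counting over the 5-subsets of `X` then gives a pair `e`
whose segment is crossed by more than `4k|X|` segments disjoint from `e` (where `r = k + 2`), and a
greedy matching among those leaves `2k + 1` pairwise disjoint ones. Let `v` be the median of their
crossing points with `e`. Pairing the `j`-th lowest crossing segment with the `j`-th highest one,
`v` lies in the convex hull of their four endpoints, hence (Carathéodory) of three of them. The
required sets are `e`, the median segment and these `k` triples.
-/

open Finset Module
open AffineMap (lineMap)

-- `120 * C(n, 5) > (n - 4) ^ 5 ≥ n ^ 5 / 32`, so `3840 * C(n, 5) > n ^ 5`.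
theorem pow_mul_lt_choose_five {n m : ℕ} (h : 7680 * (m + 1) ≤ n) :
    n ^ 3 * (2 * m * n) < n.choose 5 := by
  have hdesc : (n + 1 - 5) ^ 5 < 120 * n.choose 5 := by
    have := Nat.pow_sub_lt_descFactorial (n := n) (k := 5) (by norm_num) (by omega)
    rwa [Nat.descFactorial_eq_factorial_mul_choose] at this
  have hhalf : n ^ 5 ≤ 32 * (n + 1 - 5) ^ 5 := by
    calc n ^ 5 ≤ (2 * (n + 1 - 5)) ^ 5 := Nat.pow_le_pow_left (by omega) 5
      _ = 32 * (n + 1 - 5) ^ 5 := by ring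
  have hn : 3840 * (n ^ 3 * (2 * m * n)) ≤ n ^ 5 := by
    calc 3840 * (n ^ 3 * (2 * m * n)) = 7680 * m * n ^ 4 := by ring
      _ ≤ n * n ^ 4 := Nat.mul_le_mul_right _ (by omega)
      _ = n ^ 5 := by ring
  omega

theorem Finset.exists_monotone_enumeration {β γ : Type*} [LinearOrder γ] (M : Finset β)
    (t : β → γ) {n : ℕ} (hM : M.card = n) :
    ∃ s : Fin n → β, Function.Injective s ∧ (∀ i, s i ∈ M) ∧ Monotone (t ∘ s) := by
  subst hM
  let g : Fin M.card → β := fun i => M.equivFin.symm i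
  have hg : Function.Injective g := Subtype.val_injective.comp M.equivFin.symm.injective
  exact ⟨g ∘ Tuple.sort (t ∘ g), hg.comp (Tuple.sort _).injective,
    fun i => (M.equivFin.symm _).2, Tuple.monotone_sort (t ∘ g)⟩

theorem pairwise_disjoint_fin_succ {α : Type*} {n : ℕ} {g : Fin (n + 1) → Finset α}
    (h0 : ∀ i : Fin n, Disjoint (g 0) (g i.succ))
    (hs : Pairwise fun i j : Fin n => Disjoint (g i.succ) (g j.succ)) :
    Pairwise fun i j => Disjoint (g i) (g j) :=
  pairwise_fin_succ_iff.2 ⟨fun i => (h0 i).symm, h0, hs⟩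

section Combinatorics

variable {α : Type*} [DecidableEq α]

theorem choose_five_le_card_mul (X : Finset α) (R : Finset α → Finset α → Prop) [DecidableRel R]
    (h : ∀ S ⊆ X, S.card = 5 → ∃ e ⊆ S, ∃ f ⊆ S, e.card = 2 ∧ f.card = 2 ∧ Disjoint e f ∧ R e f) :
    X.card.choose 5 ≤
      ((X.powersetCard 2 ×ˢ X.powersetCard 2).filter (fun p => R p.1 p.2)).card * X.card := by
  rw [← card_powersetCard, ← card_product]
  -- every 5-subset is `insert x (e ∪ f)` for some related pair `(e, f)` and point `x`
  refine card_le_card_of_surjOn (fun q => insert q.2 (q.1.1 ∪ q.1.2)) fun S hS => ?_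
  obtain ⟨hSX, hS⟩ := mem_powersetCard.1 hS
  obtain ⟨e, heS, f, hfS, he, hf, hef, hR⟩ := h S hSX hS
  have hef4 : (e ∪ f).card = 4 := by rw [card_union_of_disjoint hef, he, hf]
  have hefS : e ∪ f ⊆ S := union_subset heS hfS
  obtain ⟨x, hx⟩ : (S \ (e ∪ f)).Nonempty := by
    rw [← card_pos, card_sdiff_of_subset hefS]; omega
  obtain ⟨hxS, hxef⟩ := mem_sdiff.1 hx
  refine ⟨((e, f), x), ?_, ?_⟩
  · simp [heS.trans hSX, hfS.trans hSX, he, hf, hR, hSX hxS]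
  · exact eq_of_subset_of_card_le (insert_subset hxS hefS)
      (by rw [card_insert_of_notMem hxef, hef4, hS])

theorem exists_lt_card_filter_of_pow_mul_lt_choose (X : Finset α)
    (R : Finset α → Finset α → Prop) [DecidableRel R]
    (h : ∀ S ⊆ X, S.card = 5 → ∃ e ⊆ S, ∃ f ⊆ S, e.card = 2 ∧ f.card = 2 ∧ Disjoint e f ∧ R e f)
    {m : ℕ} (hm : X.card ^ 3 * m < X.card.choose 5) :
    ∃ e ∈ X.powersetCard 2, m < ((X.powersetCard 2).filter (R e)).card := by
  set C := (X.powersetCard 2 ×ˢ X.powersetCard 2).filter (fun p => R p.1 p.2)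
  have hC : (X.powersetCard 2).card * m < C.card := by
    have h5 := choose_five_le_card_mul X R h
    have h2 : (X.powersetCard 2).card ≤ X.card ^ 2 := by
      rw [card_powersetCard]; exact Nat.choose_le_pow _ _
    by_contra! hle
    have := calc X.card.choose 5 ≤ C.card * X.card := h5
      _ ≤ X.card ^ 2 * m * X.card :=
        Nat.mul_le_mul_right _ (hle.trans (Nat.mul_le_mul_right m h2))
      _ = X.card ^ 3 * m := by ring
    omega
  obtain ⟨e, he, hfib⟩ := exists_lt_card_fiber_of_mul_lt_card_of_maps_to
    (f := Prod.fst) (fun p hp => (mem_product.1 (mem_filter.1 hp).1).1) hC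
  refine ⟨e, he, hfib.trans_le (card_le_card_of_injOn Prod.snd (fun p hp => ?_) ?_)⟩
  · simp only [coe_filter, mem_filter, mem_product, Set.mem_ofPred_eq] at hp ⊢
    obtain ⟨⟨⟨-, hp2⟩, hR⟩, rfl⟩ := hp
    exact ⟨hp2, hR⟩
  · intro p hp q hq hpq
    simp only [coe_filter, Set.mem_ofPred_eq] at hp hq
    exact Prod.ext (hp.2.trans hq.2.symm) hpq

theorem exists_pairwiseDisjoint_subset_card_le_mul (F : Finset (Finset α)) (D : ℕ)
    (hne : ∀ e ∈ F, e.Nonempty) (hD : ∀ e ∈ F, (F.filter (fun f => ¬Disjoint e f)).card ≤ D) :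
    ∃ M ⊆ F, (M : Set (Finset α)).PairwiseDisjoint id ∧ F.card ≤ M.card * D := by
  induction F using Finset.strongInduction with
  | H F ih =>
    rcases F.eq_empty_or_nonempty with rfl | ⟨e, he⟩
    · exact ⟨∅, empty_subset _, by simp, by simp⟩
    set F' := F.filter (Disjoint e)
    have hee : ¬Disjoint e e := fun h => (hne e he).ne_empty (disjoint_self.1 h)
    have heF' : e ∉ F' := fun h => hee (mem_filter.1 h).2
    obtain ⟨M, hMF', hM, hcard⟩ := ih F' (filter_ssubset.2 ⟨e, he, hee⟩)
      (fun f hf => hne f (filter_subset _ _ hf))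
      (fun f hf => (card_le_card (filter_subset_filter _ (filter_subset _ _))).trans
        (hD f (filter_subset _ _ hf)))
    refine ⟨insert e M, insert_subset he (hMF'.trans (filter_subset _ _)), ?_, ?_⟩
    · rw [coe_insert]
      exact hM.insert fun f hf _ => (mem_filter.1 (hMF' hf)).2
    · have hsplit : F'.card + (F.filter (fun f => ¬Disjoint e f)).card = F.card :=
        card_filter_add_card_filter_not _
      rw [card_insert_of_notMem (fun h => heF' (hMF' h)), add_mul, one_mul]
      have := hD e he
      omega

theorem card_filter_not_disjoint_le {X : Finset α} {F : Finset (Finset α)}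
    (hF : F ⊆ X.powersetCard 2) {e : Finset α} (he : e.card = 2) :
    (F.filter (fun f => ¬Disjoint e f)).card ≤ 2 * X.card := by
  have hcover : F.filter (fun f => ¬Disjoint e f) ⊆ e.biUnion (fun x => F.filter (x ∈ ·)) := by
    intro f hf
    obtain ⟨hfF, hef⟩ := mem_filter.1 hf
    obtain ⟨x, hxe, hxf⟩ := not_disjoint_iff.1 hef
    exact mem_biUnion.2 ⟨x, hxe, mem_filter.2 ⟨hfF, hxf⟩⟩
  have hstar : ∀ x, (F.filter (x ∈ ·)).card ≤ X.card := fun x => by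
    calc _ ≤ (X.powersetCard 1).card := by
          refine card_le_card_of_injOn (fun f => f.erase x) (fun f hf => ?_) fun f hf g hg hfg => ?_
          · obtain ⟨hfF, hxf⟩ := mem_filter.1 hf
            obtain ⟨hfX, hf2⟩ := mem_powersetCard.1 (hF hfF)
            simp [mem_powersetCard, card_erase_of_mem hxf, hf2, (erase_subset x f).trans hfX]
          · rw [← insert_erase (mem_filter.1 hf).2, ← insert_erase (mem_filter.1 hg).2]
            exact congrArg (insert x) hfg
      _ = X.card := by rw [card_powersetCard, Nat.choose_one_right]
  calc _ ≤ _ := card_le_card hcover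
    _ ≤ ∑ x ∈ e, (F.filter (x ∈ ·)).card := card_biUnion_le
    _ ≤ ∑ _x ∈ e, X.card := sum_le_sum fun x _ => hstar x
    _ = 2 * X.card := by rw [sum_const, he, smul_eq_mul]

theorem exists_pairwiseDisjoint_subset_card_eq {X : Finset α} {F : Finset (Finset α)}
    (hF : F ⊆ X.powersetCard 2) {m : ℕ} (hm : 2 * m * X.card < F.card) :
    ∃ M ⊆ F, M.card = m + 1 ∧ (M : Set (Finset α)).PairwiseDisjoint id := by
  have hF2 : ∀ e ∈ F, e.card = 2 := fun e he => (mem_powersetCard.1 (hF he)).2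
  obtain ⟨M₀, hM₀F, hM₀, hcard⟩ := exists_pairwiseDisjoint_subset_card_le_mul F (2 * X.card)
    (fun e he => card_pos.1 (by rw [hF2 e he]; norm_num))
    (fun e he => card_filter_not_disjoint_le hF (hF2 e he))
  have hm₀ : m < M₀.card := Nat.lt_of_mul_lt_mul_right (a := 2 * X.card) (by linarith)
  obtain ⟨M, hMM₀, hM⟩ := exists_subset_card_eq (show m + 1 ≤ M₀.card by omega)
  exact ⟨M, hMM₀.trans hM₀F, hM, hM₀.subset (coe_subset.2 hMM₀)⟩

end Combinatorics

section Convexity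

variable {E : Type*} [AddCommGroup E] [Module ℝ E]

theorem eq_or_pos_of_mem_convexHull_triple (g : E →ᵃ[ℝ] ℝ) {a b c y : E} (ha : g a = 0)
    (hb : 0 < g b) (hc : 0 < g c) (hy : y ∈ convexHull ℝ {a, b, c}) : y = a ∨ 0 < g y := by
  rw [convexHull_insert (Set.insert_nonempty b {c}), convexHull_pair, mem_convexJoin] at hy
  obtain ⟨_, rfl, w, hw, hyw⟩ := hy
  have hgw : 0 < g w := by
    have : g w ∈ segment ℝ (g b) (g c) := image_segment ℝ g b c ▸ Set.mem_image_of_mem g hw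
    exact (convex_Ioi 0).segment_subset hb hc this
  rw [segment_eq_image_lineMap] at hyw
  obtain ⟨t, ht, rfl⟩ := hyw
  rcases ht.1.eq_or_lt with rfl | ht0
  · exact Or.inl (AffineMap.lineMap_apply_zero _ _)
  · right
    rw [AffineMap.apply_lineMap, ha, AffineMap.lineMap_apply_module]
    simpa using mul_pos ht0 hgw

theorem notMem_convexHull_triple_of_mul_pos (g : E →ᵃ[ℝ] ℝ) {x y P Q : E}
    (hPQ : 0 < g P * g Q) (hx : g x = 0) (hy : g y = 0) (hxy : x ≠ y) :
    x ∉ convexHull ℝ {y, P, Q} := fun hmem => by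
  have hP : g P ≠ 0 := left_ne_zero_of_mul hPQ.ne'
  rcases eq_or_pos_of_mem_convexHull_triple (g P • g) (by simp [hy])
    (by simpa using mul_self_pos.2 hP) (by simpa using hPQ) hmem with h | h
  · exact hxy h
  · simp [hx] at h

theorem notMem_convexHull_of_apply_eq_zero (g : E →ᵃ[ℝ] ℝ) {P Q R x₁ x₂ : E} (hP : g P = 0)
    (hQ : 0 < g Q) (hR : 0 < g R) (h₁ : x₁ ∈ convexHull ℝ {P, Q, R})
    (h₂ : x₂ ∈ convexHull ℝ {P, Q, R}) (hx₁ : x₁ ≠ P) (hx₂ : x₂ ≠ P) :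
    P ∉ convexHull ℝ {Q, x₁, x₂} := fun hmem => by
  have hpos : ({Q, x₁, x₂} : Set E) ⊆ g ⁻¹' Set.Ioi 0 := by
    rintro x (rfl | rfl | rfl)
    · exact hQ
    · exact (eq_or_pos_of_mem_convexHull_triple g hP hQ hR h₁).resolve_left hx₁
    · exact (eq_or_pos_of_mem_convexHull_triple g hP hQ hR h₂).resolve_left hx₂
  have := convexHull_min hpos ((convex_Ioi 0).affine_preimage g) hmem
  simp [hP] at this

def Crosses (e f : Finset E) : Prop :=
  Disjoint e f ∧ (convexHull ℝ (e : Set E) ∩ convexHull ℝ (f : Set E)).Nonempty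

theorem Finset.exists_radon_partition [FiniteDimensional ℝ E] [DecidableEq E] {Q : Finset E}
    (hQ : finrank ℝ E + 2 ≤ Q.card) :
    ∃ T ⊆ Q, (convexHull ℝ (T : Set E) ∩ convexHull ℝ ((Q \ T : Finset E) : Set E)).Nonempty := by
  classical
  have hdep : ¬AffineIndependent ℝ ((↑) : Q → E) := fun hai => by
    have := hai.card_le_finrank_succ.trans
      (Nat.succ_le_succ (Submodule.finrank_le (vectorSpan ℝ (Set.range ((↑) : Q → E)))))
    simp only [Fintype.card_coe] at this
    omega
  obtain ⟨I, hI⟩ := Convex.radon_partition hdep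
  refine ⟨(univ.filter (· ∈ I)).map (Function.Embedding.subtype _), fun x hx => ?_, ?_⟩
  · simp only [mem_map, mem_filter] at hx
    obtain ⟨y, -, rfl⟩ := hx
    exact y.2
  · convert hI using 3
    · ext x; simp
    · ext x
      simp only [coe_sdiff, coe_map, coe_filter, Set.mem_sdiff, Set.mem_image, mem_coe,
        Function.Embedding.coe_subtype, Set.mem_compl_iff]
      constructor
      · rintro ⟨hx, hxI⟩
        exact ⟨⟨x, hx⟩, fun h => hxI ⟨_, by simpa using h, rfl⟩, rfl⟩
      · rintro ⟨y, hy, rfl⟩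
        exact ⟨y.2, fun ⟨z, hz, hzy⟩ => hy (Subtype.ext hzy ▸ by simpa using hz)⟩

theorem exists_crosses_of_convexIndependent [FiniteDimensional ℝ E] [DecidableEq E]
    (hE : finrank ℝ E = 2) {Q : Finset E} (hQ : Q.card = 4)
    (hci : ConvexIndependent ℝ ((↑) : ↥(Q : Set E) → E)) :
    ∃ e ⊆ Q, e.card = 2 ∧ Crosses e (Q \ e) := by
  rw [convexIndependent_set_iff_notMem_convexHull_sdiff] at hci
  have not_singleton : ∀ B ⊆ Q, B.card = 1 →
      (convexHull ℝ (B : Set E) ∩ convexHull ℝ ((Q \ B : Finset E) : Set E)).Nonempty → False := by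
    intro B hBQ hB ⟨v, hvB, hvQ⟩
    obtain ⟨x, rfl⟩ := card_eq_one.1 hB
    rw [coe_singleton, convexHull_singleton, Set.mem_singleton_iff] at hvB
    subst hvB
    exact hci v (hBQ (mem_singleton_self v)) (by simpa using hvQ)
  obtain ⟨T, hTQ, hT⟩ := Finset.exists_radon_partition (Q := Q) (by omega)
  have hT₀ : T.Nonempty := by
    by_contra h
    simp [not_nonempty_iff_eq_empty.1 h] at hT
  have hT₄ : (Q \ T).Nonempty := by
    by_contra h
    simp [not_nonempty_iff_eq_empty.1 h] at hT
  have hT₁ : T.card ≠ 1 := fun h => not_singleton T hTQ h hT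
  have hT₃ : (Q \ T).card ≠ 1 := fun h =>
    not_singleton (Q \ T) sdiff_subset h (by rwa [Finset.sdiff_sdiff_eq_self hTQ, Set.inter_comm])
  have := card_sdiff_add_card_eq_card hTQ
  have := hT₀.card_pos
  have := hT₄.card_pos
  exact ⟨T, hTQ, by omega, disjoint_sdiff, hT⟩

theorem lineMap_mem_convexHull_union {p q : E} {f g : Set E} {a b c : ℝ}
    (ha : lineMap p q a ∈ convexHull ℝ f) (hc : lineMap p q c ∈ convexHull ℝ g)
    (hab : a ≤ b) (hbc : b ≤ c) : lineMap p q b ∈ convexHull ℝ (f ∪ g) := by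
  have hb : lineMap p q b ∈ segment ℝ (lineMap p q a) (lineMap p q c) := by
    rw [← image_segment, segment_eq_Icc (hab.trans hbc)]
    exact Set.mem_image_of_mem _ ⟨hab, hbc⟩
  exact (convex_convexHull ℝ _).segment_subset (convexHull_mono Set.subset_union_left ha)
    (convexHull_mono Set.subset_union_right hc) hb

theorem exists_subset_card_eq_mem_convexHull [FiniteDimensional ℝ E] {s : Finset E} {x : E}
    (hs : finrank ℝ E + 1 ≤ s.card) (hx : x ∈ convexHull ℝ (s : Set E)) :
    ∃ t ⊆ s, t.card = finrank ℝ E + 1 ∧ x ∈ convexHull ℝ (t : Set E) := by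
  rw [convexHull_eq_union] at hx
  simp only [Set.mem_iUnion] at hx
  obtain ⟨t, hts, hai, hxt⟩ := hx
  have hcard : t.card ≤ finrank ℝ E + 1 := by
    simpa using hai.card_le_finrank_succ.trans
      (Nat.succ_le_succ (Submodule.finrank_le (vectorSpan ℝ (Set.range ((↑) : t → E)))))
  obtain ⟨u, htu, hus, hu⟩ := exists_subsuperset_card_eq (coe_subset.1 hts) hcard hs
  exact ⟨u, hus, hu, convexHull_mono (coe_subset.2 htu) hxt⟩

theorem exists_median_point {e : Finset E} (he : e.card = 2) {k : ℕ} {M : Finset (Finset E)}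
    (hM : M.card = 2 * k + 1)
    (hMe : ∀ f ∈ M, (convexHull ℝ (e : Set E) ∩ convexHull ℝ (f : Set E)).Nonempty) :
    ∃ v ∈ convexHull ℝ (e : Set E), ∃ s : Fin (2 * k + 1) → Finset E,
      Function.Injective s ∧ (∀ i, s i ∈ M) ∧ v ∈ convexHull ℝ (s ⟨k, by omega⟩ : Set E) ∧
      ∀ j : Fin k, v ∈ convexHull ℝ ((s ⟨j, by omega⟩ : Set E) ∪ s ⟨j + k + 1, by omega⟩) := by
  classical
  obtain ⟨p, q, -, rfl⟩ := card_eq_two.1 he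
  have hcross : ∀ f ∈ M, ∃ t ∈ Set.Icc (0 : ℝ) 1,
      lineMap p q t ∈ convexHull ℝ (f : Set E) := by
    intro f hf
    obtain ⟨v, hve, hvf⟩ := hMe f hf
    rw [coe_pair, convexHull_pair, segment_eq_image_lineMap] at hve
    obtain ⟨t, ht, rfl⟩ := hve
    exact ⟨t, ht, hvf⟩
  choose! t ht using hcross
  obtain ⟨s, hsinj, hsM, hmono⟩ := M.exists_monotone_enumeration t hM
  -- `v` is the median of the points where the members of `M` meet `e`
  refine ⟨lineMap p q (t (s ⟨k, by omega⟩)), ?_, s, hsinj, hsM, (ht _ (hsM _)).2,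
    fun j => ?_⟩
  · rw [coe_pair, convexHull_pair, segment_eq_image_lineMap]
    exact Set.mem_image_of_mem _ (ht _ (hsM _)).1
  · exact lineMap_mem_convexHull_union (ht _ (hsM _)).2 (ht _ (hsM _)).2
      (hmono (Fin.mk_le_mk.2 (by omega))) (hmono (Fin.mk_le_mk.2 (by omega)))

theorem exists_two_mem_convexHull_of_card_eq_five [DecidableEq E] {S : Finset E}
    (hS : S.card = 5)
    (hS4 : ∀ Q ⊆ S, Q.card = 4 → ¬ConvexIndependent ℝ ((↑) : ↥(Q : Set E) → E)) :
    ∃ x₁ ∈ S, ∃ x₂ ∈ S.erase x₁, x₁ ∈ convexHull ℝ ((S.erase x₁).erase x₂ : Set E) ∧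
      x₂ ∈ convexHull ℝ ((S.erase x₁).erase x₂ : Set E) := by
  have hin : ∀ Q ⊆ S, Q.card = 4 → ∃ x ∈ Q, x ∈ convexHull ℝ (Q.erase x : Set E) := by
    intro Q hQS hQ4
    have := hS4 Q hQS hQ4
    rw [convexIndependent_set_iff_notMem_convexHull_sdiff] at this
    push Not at this
    simpa only [coe_erase, mem_coe] using this
  obtain ⟨z, hz⟩ := card_pos.1 (by omega : 0 < S.card)
  obtain ⟨x₁, hx₁, h₁⟩ := hin (S.erase z) (erase_subset z S) (by rw [card_erase_of_mem hz, hS])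
  have hx₁S := mem_of_mem_erase hx₁
  obtain ⟨x₂, hx₂, h₂⟩ :=
    hin (S.erase x₁) (erase_subset x₁ S) (by rw [card_erase_of_mem hx₁S, hS])
  refine ⟨x₁, hx₁S, x₂, hx₂, convexHull_min (fun y hy => ?_) (convex_convexHull ℝ _) h₁, h₂⟩
  by_cases hy₂ : y = x₂
  · exact hy₂ ▸ h₂
  · exact subset_convexHull ℝ _ (by simp at hy ⊢; tauto)

end Convexity

section Plane

local notation "ℝ²" => Fin 2 → ℝ

def cross (u v : ℝ²) : ℝ := u 0 * v 1 - u 1 * v 0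

def sideOfLine (a b : ℝ²) : ℝ² →ᵃ[ℝ] ℝ where
  toFun y := cross (b - a) (y - a)
  linear :=
    { toFun := cross (b - a)
      map_add' := fun u v => by simp only [cross, Pi.add_apply]; ring
      map_smul' := fun c u => by
        simp only [cross, Pi.smul_apply, smul_eq_mul, RingHom.id_apply]; ring }
  map_vadd' := fun y v => by
    simp only [cross, vadd_eq_add, Pi.sub_apply, Pi.add_apply, LinearMap.coe_mk, AddHom.coe_mk]
    ring

theorem sideOfLine_apply (a b y : ℝ²) : sideOfLine a b y = cross (b - a) (y - a) := rfl

@[simp] theorem sideOfLine_apply_left (a b : ℝ²) : sideOfLine a b a = 0 := by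
  simp [sideOfLine_apply, cross]

@[simp] theorem sideOfLine_apply_right (a b : ℝ²) : sideOfLine a b b = 0 := by
  simp only [sideOfLine_apply, cross, Pi.sub_apply]; ring

@[simp] theorem sideOfLine_self (a y : ℝ²) : sideOfLine a a y = 0 := by
  simp [sideOfLine_apply, cross]

theorem exists_eq_smul_of_cross_eq_zero {u v : ℝ²} (hu : u ≠ 0) (h : cross u v = 0) :
    ∃ t : ℝ, v = t • u := by
  unfold cross at h
  by_cases h0 : u 0 = 0
  · have h1 : u 1 ≠ 0 := fun h1 => hu (by ext i; fin_cases i <;> simp [h0, h1])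
    refine ⟨v 1 / u 1, ?_⟩
    ext i; fin_cases i <;> simp only [Fin.zero_eta, Fin.mk_one, Pi.smul_apply, smul_eq_mul]
    · rw [h0] at h ⊢
      simpa [h1] using h
    · field_simp
  · refine ⟨v 0 / u 0, ?_⟩
    ext i; fin_cases i <;> simp only [Fin.zero_eta, Fin.mk_one, Pi.smul_apply, smul_eq_mul]
    · field_simp
    · field_simp
      linarith

theorem collinear_of_sideOfLine_eq_zero {a b y : ℝ²} (hab : a ≠ b) (h : sideOfLine a b y = 0) :
    Collinear ℝ {a, b, y} := by
  obtain ⟨t, ht⟩ := exists_eq_smul_of_cross_eq_zero (sub_ne_zero.2 hab.symm) h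
  rw [Set.pair_comm, Set.insert_comm]
  apply collinear_insert_of_mem_affineSpan_pair
  convert AffineMap.lineMap_mem_affineSpan_pair t a b using 1
  rw [AffineMap.lineMap_apply, vsub_eq_sub, vadd_eq_add, ← ht, sub_add_cancel]

theorem exists_affineMap_apex {P Q R : ℝ²} (h : ¬Collinear ℝ {P, Q, R}) :
    ∃ g : ℝ² →ᵃ[ℝ] ℝ, g P = 0 ∧ 0 < g Q ∧ 0 < g R := by
  have hP : sideOfLine Q R P ≠ 0 := fun h0 => h (by
    convert collinear_of_sideOfLine_eq_zero (ne₂₃_of_not_collinear h) h0 using 1; grind)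
  refine ⟨sideOfLine Q R P • (AffineMap.const ℝ ℝ² (sideOfLine Q R P) - sideOfLine Q R),
    ?_, ?_, ?_⟩ <;> simp [mul_self_pos.2 hP]

theorem exists_mul_pos_of_ne_zero {α : Type*} (f : α → ℝ) {a b c : α} (ha : f a ≠ 0)
    (hb : f b ≠ 0) (hc : f c ≠ 0) :
    ∃ P Q R, ({P, Q, R} : Set α) = {a, b, c} ∧ 0 < f P * f Q := by
  by_contra! h
  have hab := h a b c rfl
  have hac := h a c b (by rw [Set.pair_comm])
  have hbc := h b c a (by grind)
  have : 0 < f a * f b * (f a * f c) * (f b * f c) := by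
    have := mul_pos (mul_pos (mul_self_pos.2 ha) (mul_self_pos.2 hb)) (mul_self_pos.2 hc)
    linarith
  exact this.not_ge (mul_nonpos_of_nonneg_of_nonpos (mul_nonneg_of_nonpos_of_nonpos hab hac) hbc)

theorem convexIndependent_of_sideOfLine_mul_pos {P Q R x₁ x₂ : ℝ²}
    (hPQR : ¬Collinear ℝ {P, Q, R}) (h₁ : x₁ ∈ convexHull ℝ {P, Q, R})
    (h₂ : x₂ ∈ convexHull ℝ {P, Q, R}) (hside : 0 < sideOfLine x₁ x₂ P * sideOfLine x₁ x₂ Q) :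
    ConvexIndependent ℝ ((↑) : ↥({P, Q, x₁, x₂} : Set ℝ²) → ℝ²) := by
  have hx₁₂ : x₁ ≠ x₂ := by rintro rfl; simp at hside
  have hx₁P : x₁ ≠ P := by rintro rfl; simp at hside
  have hx₂P : x₂ ≠ P := by rintro rfl; simp at hside
  have hx₁Q : x₁ ≠ Q := by rintro rfl; simp at hside
  have hx₂Q : x₂ ≠ Q := by rintro rfl; simp at hside
  have hQPR : ({Q, P, R} : Set ℝ²) = {P, Q, R} := Set.insert_comm Q P {R}
  obtain ⟨gP, hgP, hgPQ, hgPR⟩ := exists_affineMap_apex hPQR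
  obtain ⟨gQ, hgQ, hgQP, hgQR⟩ := exists_affineMap_apex (hQPR ▸ hPQR)
  rw [convexIndependent_set_iff_notMem_convexHull_sdiff]
  rintro y (rfl | rfl | rfl | rfl) hy
  · exact notMem_convexHull_of_apply_eq_zero gP hgP hgPQ hgPR h₁ h₂ hx₁P hx₂P
      (convexHull_mono (by grind) hy)
  · exact notMem_convexHull_of_apply_eq_zero gQ hgQ hgQP hgQR (hQPR ▸ h₁) (hQPR ▸ h₂) hx₁Q hx₂Q
      (convexHull_mono (by grind) hy)
  · exact notMem_convexHull_triple_of_mul_pos (sideOfLine y x₂) hside (by simp) (by simp) hx₁₂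
      (convexHull_mono (by grind) hy)
  · exact notMem_convexHull_triple_of_mul_pos (sideOfLine x₁ y) hside (by simp) (by simp)
      hx₁₂.symm (convexHull_mono (by grind) hy)

theorem exists_convexIndependent_subset_card_eq_four {S : Finset ℝ²} (hS : S.card = 5)
    (hgen : ∀ x ∈ S, ∀ y ∈ S, ∀ z ∈ S, x ≠ y → x ≠ z → y ≠ z → ¬Collinear ℝ {x, y, z}) :
    ∃ Q ⊆ S, Q.card = 4 ∧ ConvexIndependent ℝ ((↑) : ↥(Q : Set ℝ²) → ℝ²) := by
  by_contra! hQ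
  obtain ⟨x₁, hx₁S, x₂, hx₂, h₁T, h₂⟩ := exists_two_mem_convexHull_of_card_eq_five hS hQ
  obtain ⟨hx₂₁, hx₂S⟩ := mem_erase.1 hx₂
  set T := (S.erase x₁).erase x₂ with hTdef
  have hTS : T ⊆ S := (erase_subset _ _).trans (erase_subset _ _)
  have hx₁T : x₁ ∉ T := fun h => by simp [hTdef] at h
  have hx₂T : x₂ ∉ T := fun h => by simp [hTdef] at h
  obtain ⟨a, b, c, hab, hac, hbc, hT⟩ :=
    card_eq_three.1 (show T.card = 3 by simp [hTdef, card_erase_of_mem, hx₁S, hx₂, hS])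
  -- `x₁, x₂` lie in the triangle `T`, and the line `x₁x₂` leaves two of its vertices `P, Q` on
  -- the same side; `{P, Q, x₁, x₂}` is then in convex position
  have hg : ∀ y ∈ T, sideOfLine x₁ x₂ y ≠ 0 := fun y hy h0 =>
    hgen x₁ hx₁S x₂ hx₂S y (hTS hy) hx₂₁.symm (fun h => hx₁T (h ▸ hy))
      (fun h => hx₂T (h ▸ hy)) (collinear_of_sideOfLine_eq_zero hx₂₁.symm h0)
  obtain ⟨P, Q, R, hPQR, hside⟩ := exists_mul_pos_of_ne_zero (sideOfLine x₁ x₂)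
    (hg a (by simp [hT])) (hg b (by simp [hT])) (hg c (by simp [hT]))
  have hTc : (T : Set ℝ²) = {P, Q, R} := by rw [hT, hPQR]; push_cast; rfl
  have hncol : ¬Collinear ℝ {P, Q, R} := by
    rw [hPQR]
    exact hgen a (hTS (by simp [hT])) b (hTS (by simp [hT])) c (hTS (by simp [hT])) hab hac hbc
  have hPT : P ∈ T := by rw [← mem_coe, hTc]; simp
  have hQT : Q ∈ T := by rw [← mem_coe, hTc]; simp
  apply hQ {P, Q, x₁, x₂}
  · intro y hy
    simp only [mem_insert, mem_singleton] at hy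
    rcases hy with rfl | rfl | rfl | rfl
    exacts [hTS hPT, hTS hQT, hx₁S, hx₂S]
  · rw [card_insert_of_notMem, card_insert_of_notMem, card_pair hx₂₁.symm]
    · simp only [mem_insert, mem_singleton, not_or]
      exact ⟨fun h => hx₁T (h ▸ hQT), fun h => hx₂T (h ▸ hQT)⟩
    · simp only [mem_insert, mem_singleton, not_or]
      exact ⟨ne₁₂_of_not_collinear hncol, fun h => hx₁T (h ▸ hPT), fun h => hx₂T (h ▸ hPT)⟩
  · convert convexIndependent_of_sideOfLine_mul_pos hncol (hTc ▸ h₁T) (hTc ▸ h₂) hside <;>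
      push_cast <;> rfl

theorem crosses_of_wbtw {x y z w : ℝ²} (h : Wbtw ℝ x y z) (hxy : x ≠ y) (hyz : y ≠ z)
    (hw : w ∉ ({x, y, z} : Set ℝ²)) : Crosses {x, z} {y, w} := by
  simp only [Set.mem_insert_iff, Set.mem_singleton_iff, not_or] at hw
  refine ⟨?_, y, ?_, subset_convexHull ℝ _ (by simp)⟩
  · simp only [disjoint_insert_left, disjoint_singleton_left, mem_insert, mem_singleton, not_or]
    exact ⟨⟨hxy, Ne.symm hw.1⟩, hyz.symm, Ne.symm hw.2.2⟩
  · rw [coe_pair, convexHull_pair]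
    exact mem_segment_iff_wbtw.2 h

theorem exists_crosses_of_card_eq_five {S : Finset ℝ²} (hS : S.card = 5) :
    ∃ e ⊆ S, ∃ f ⊆ S, e.card = 2 ∧ f.card = 2 ∧ Crosses e f := by
  by_cases hgen : ∀ x ∈ S, ∀ y ∈ S, ∀ z ∈ S, x ≠ y → x ≠ z → y ≠ z → ¬Collinear ℝ {x, y, z}
  · obtain ⟨Q, hQS, hQ, hci⟩ := exists_convexIndependent_subset_card_eq_four hS hgen
    obtain ⟨e, heQ, he, hcross⟩ := exists_crosses_of_convexIndependent (by simp) hQ hci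
    exact ⟨e, heQ.trans hQS, Q \ e, sdiff_subset.trans hQS, he,
      by rw [card_sdiff_of_subset heQ, hQ, he], hcross⟩
  push Not at hgen
  obtain ⟨x, hx, y, hy, z, hz, hxy, hxz, hyz, hcol⟩ := hgen
  obtain ⟨w, hw⟩ : ((S \ {x, y, z}) : Finset ℝ²).Nonempty := by
    rw [← card_pos, card_sdiff_of_subset (by simp [insert_subset_iff, hx, hy, hz])]
    have := card_le_three (a := x) (b := y) (c := z)
    omega
  obtain ⟨hwS, hw⟩ := mem_sdiff.1 hw
  have hw' : w ∉ ({x, y, z} : Set ℝ²) := by simpa using hw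
  have pair_sub : ∀ {u v}, u ∈ S → v ∈ S → ({u, v} : Finset ℝ²) ⊆ S := fun hu hv => by
    simp [insert_subset_iff, hu, hv]
  have hxw : x ≠ w := fun h => hw (by simp [h])
  have hyw : y ≠ w := fun h => hw (by simp [h])
  have hzw : z ≠ w := fun h => hw (by simp [h])
  rcases hcol.wbtw_or_wbtw_or_wbtw with h | h | h
  · exact ⟨{x, z}, pair_sub hx hz, {y, w}, pair_sub hy hwS, card_pair hxz, card_pair hyw,
      crosses_of_wbtw h hxy hyz hw'⟩
  · exact ⟨{y, x}, pair_sub hy hx, {z, w}, pair_sub hz hwS, card_pair hxy.symm, card_pair hzw,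
      crosses_of_wbtw h hyz hxz.symm (by grind)⟩
  · exact ⟨{z, y}, pair_sub hz hy, {x, w}, pair_sub hx hwS, card_pair hyz.symm, card_pair hxw,
      crosses_of_wbtw h hxz.symm hxy (by grind)⟩

theorem exists_tverberg_family {X e : Finset ℝ²} (heX : e ⊆ X) (he : e.card = 2) {k : ℕ}
    {M : Finset (Finset ℝ²)} (hM : M.card = 2 * k + 1)
    (hMX : ∀ f ∈ M, f ⊆ X ∧ f.card = 2 ∧ Crosses e f)
    (hMdisj : (M : Set (Finset ℝ²)).PairwiseDisjoint id) :
    ∃ Y : Fin (k + 2) → Finset ℝ²,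
      (∀ i, Y i ⊆ X) ∧
      (Pairwise fun i j => Disjoint (Y i) (Y j)) ∧
      (∀ i : Fin (k + 2), (Y i).card = if (i : ℕ) < 2 then 2 else 3) ∧
      (⋂ i, convexHull ℝ ((Y i : Set ℝ²))).Nonempty := by
  obtain ⟨v, hve, s, hsinj, hsM, hvmid, hvj⟩ :=
    exists_median_point he hM fun f hf => (hMX f hf).2.2.2
  have hs : ∀ {i i'}, i ≠ i' → Disjoint (s i) (s i') := fun h =>
    hMdisj (hsM _) (hsM _) (hsinj.ne h)
  have htriple : ∀ j : Fin k, ∃ T ⊆ s ⟨j, by omega⟩ ∪ s ⟨j + k + 1, by omega⟩,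
      T.card = 3 ∧ v ∈ convexHull ℝ (T : Set ℝ²) := fun j => by
    have hcard : (s ⟨j, by omega⟩ ∪ s ⟨j + k + 1, by omega⟩).card = 4 := by
      rw [card_union_of_disjoint (hs (by rw [ne_eq, Fin.mk.injEq]; omega)), (hMX _ (hsM _)).2.1,
        (hMX _ (hsM _)).2.1]
    obtain ⟨T, hT, hT3, hTv⟩ := exists_subset_card_eq_mem_convexHull
      (s := s ⟨j, by omega⟩ ∪ s ⟨j + k + 1, by omega⟩) (by simp [hcard])
      (by rw [coe_union]; exact hvj j)
    exact ⟨T, hT, by simpa using hT3, hTv⟩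
  choose T hTs hT3 hTv using htriple
  refine ⟨Fin.cons e (Fin.cons (s ⟨k, by omega⟩) T), ?_, ?_, ?_, ⟨v, Set.mem_iInter.2 ?_⟩⟩
  · refine Fin.cases heX (Fin.cases (hMX _ (hsM _)).1 fun j => ?_)
    exact (hTs j).trans (union_subset (hMX _ (hsM _)).1 (hMX _ (hsM _)).1)
  · have hTdisj : ∀ (i : Fin (2 * k + 1)) (j : Fin k), (i : ℕ) ≠ j → (i : ℕ) ≠ j + k + 1 →
        Disjoint (s i) (T j) := fun i j h₁ h₂ =>
      disjoint_of_subset_right (hTs j) (disjoint_union_right.2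
        ⟨hs fun h => h₁ (congrArg Fin.val h), hs fun h => h₂ (congrArg Fin.val h)⟩)
    have heT : ∀ j, Disjoint e (T j) := fun j => disjoint_of_subset_right (hTs j)
      (disjoint_union_right.2 ⟨(hMX _ (hsM _)).2.2.1, (hMX _ (hsM _)).2.2.1⟩)
    refine pairwise_disjoint_fin_succ (Fin.cases (hMX _ (hsM _)).2.2.1 heT) ?_
    refine pairwise_disjoint_fin_succ
      (fun j => hTdisj ⟨k, by omega⟩ j (by dsimp only; omega) (by dsimp only; omega))
      fun j j' hjj' => ?_
    have hjj'' : (j : ℕ) ≠ j' := fun h => hjj' (Fin.ext h)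
    exact disjoint_of_subset_left (hTs j) (disjoint_union_left.2
      ⟨hTdisj _ j' (by dsimp only; omega) (by dsimp only; omega),
        hTdisj _ j' (by dsimp only; omega) (by dsimp only; omega)⟩)
  · exact Fin.cases (by simpa using he)
      (Fin.cases (by simpa using (hMX _ (hsM _)).2.1) fun j => by simpa using hT3 j)
  · exact Fin.cases hve (Fin.cases hvmid hTv)

end Plane

/-- The `r`-tuple `(1, 1, 2, …, 2)` is affinely Tverberg prescribable for `r` and `d = 2`:
there is an `N` such that every finite set `X` of at least `N` points in `ℝ²` contains
`r` pairwise disjoint subsets of sizes `2, 2, 3, …, 3` whose convex hulls share a point. -/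
theorem affinely_prescribable_one_one_twos (r : ℕ) (hr : 2 ≤ r) :
    ∃ N : ℕ, ∀ X : Finset (Fin 2 → ℝ), N ≤ X.card →
      ∃ Y : Fin r → Finset (Fin 2 → ℝ),
        (∀ i, Y i ⊆ X) ∧
        (Pairwise fun i j => Disjoint (Y i) (Y j)) ∧
        (∀ i : Fin r, (Y i).card = if (i : ℕ) < 2 then 2 else 3) ∧
        (⋂ i, convexHull ℝ ((Y i : Set (Fin 2 → ℝ)))).Nonempty := by
  classical
  obtain ⟨k, rfl⟩ : ∃ k, r = k + 2 := ⟨r - 2, by omega⟩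
  refine ⟨7680 * (2 * k + 1), fun X hX => ?_⟩
  obtain ⟨e, he, hmany⟩ := exists_lt_card_filter_of_pow_mul_lt_choose X Crosses
    (fun S _ hS => by
      obtain ⟨e, heS, f, hfS, he, hf, hef⟩ := exists_crosses_of_card_eq_five hS
      exact ⟨e, heS, f, hfS, he, hf, hef.1, hef⟩)
    (pow_mul_lt_choose_five hX)
  obtain ⟨heX, he2⟩ := mem_powersetCard.1 he
  obtain ⟨M, hMF, hM, hMdisj⟩ := exists_pairwiseDisjoint_subset_card_eq (filter_subset _ _) hmany
  refine exists_tverberg_family heX he2 hM (fun f hf => ?_) hMdisj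
  simpa [mem_powersetCard, and_assoc] using hMF hf
end

section
/- Let r ≥ 2 and d ≥ 1 be integers and let (d_1, …, d_r) be an r-tuple of nonnegative integers that is Tverberg prescribable for r and d. Then r·d_i ≥ (r−1)(d−1) for every i ∈ {1, …, r}. -/
/-!
Suppose `r * k < (r - 1) * (d - 1)` for `k = D i₀`. Choose points `q v ∈ ℝ^d` on the hyperplane
`{z | z 0 = 1}` in general position, so that the spans of pairwise disjoint vertex sets of total
size at most `(r - 1) * d` meet only in `0`; such points are found one at a time, each avoiding
finitely many proper subspaces. Map `y ∈ Δ_N` to `∑ v, y v • q v`, with its (constant) coordinate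
`0` replaced by the elementary symmetric polynomial of degree `k + 2` in `y`, which vanishes
exactly when `y` has at most `k + 1` support points. In a prescribed Tverberg partition for this
map `x i₀` has at most `k + 1` support points, so by coordinate `0` all the `x i` do, and the
common value of `∑ v, x i v • q v` lies in the spans of all `r` supports, of total size at most
`r * (k + 1) ≤ (r - 1) * d`. So it is `0`, although its coordinate `0` is `1`.
-/

/-- An `r`-tuple `D` of nonnegative integers is Tverberg prescribable for `r` and `d` if there
is an `N` such that for every continuous map `f : Δ_N → ℝ^d` there are `r` pairwise disjoint
subsets `S₁, …, S_r` of the vertex set with `|Sᵢ| = D i + 1` and points `x₁, …, x_r` of the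
simplex, the support of `xᵢ` contained in `Sᵢ`, that are mapped to a common point by `f`. -/
def TverbergPrescribable (r d : ℕ) (D : Fin r → ℕ) : Prop :=
  ∃ N : ℕ, ∀ f : (stdSimplex ℝ (Fin (N + 1))) → (Fin d → ℝ), Continuous f →
    ∃ S : Fin r → Finset (Fin (N + 1)),
      (Pairwise fun i j => Disjoint (S i) (S j)) ∧
      (∀ i, (S i).card = D i + 1) ∧
      ∃ x : Fin r → stdSimplex ℝ (Fin (N + 1)),
        (∀ i, ∀ v : Fin (N + 1), (x i : Fin (N + 1) → ℝ) v ≠ 0 → v ∈ S i) ∧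
        (∀ i j, f (x i) = f (x j))

open Submodule Module Finset Function

theorem Set.image_update_of_notMem {α β : Type*} [DecidableEq α] (f : α → β) {s : Set α} {a : α}
    (b : β) (ha : a ∉ s) : update f a b '' s = f '' s :=
  image_congr fun _ hx => update_of_ne (ne_of_mem_of_not_mem hx ha) b f

namespace Submodule

variable {K E : Type*} [Field K] [AddCommGroup E] [Module K E]

theorem sup_span_singleton_inf_eq_of_notMem {U Z : Submodule K E} {c : E} (hc : c ∉ U ⊔ Z) :
    (U ⊔ K ∙ c) ⊓ Z = U ⊓ Z := by
  refine le_antisymm (fun z ⟨hz, hzZ⟩ => ⟨?_, hzZ⟩) (inf_le_inf_right _ le_sup_left)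
  obtain ⟨u, hu, w, hw, rfl⟩ := mem_sup.1 hz
  obtain ⟨t, rfl⟩ := mem_span_singleton.1 hw
  obtain rfl | ht := eq_or_ne t 0
  · simpa using hu
  · refine absurd ?_ hc
    have : c = t⁻¹ • (u + t • c) - t⁻¹ • u := by
      rw [smul_add, smul_smul, inv_mul_cancel₀ ht, one_smul, add_sub_cancel_left]
    rw [this]
    exact sub_mem (smul_mem _ _ (mem_sup_right hzZ)) (smul_mem _ _ (mem_sup_left hu))

theorem exists_forall_notMem_of_finite [Infinite K] {s : Set (Submodule K E)} (hs : s.Finite)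
    (hne : ∀ p ∈ s, p ≠ ⊤) : ∃ c : E, ∀ p ∈ s, c ∉ p := by
  have := hs.fintype
  obtain ⟨c, -, hc⟩ := Set.exists_of_ssubset <| iUnion_ssubset_of_forall_ne_top_of_card_lt univ
    (fun p : s => (p : Submodule K E)) (fun p => hne p p.2) (by simp [hs])
  exact ⟨c, fun p hp hcp => hc (Set.mem_biUnion (mem_univ ⟨p, hp⟩) hcp)⟩

theorem exists_apply_eq_one_forall_notMem [Infinite K] {φ : E →ₗ[K] K} (hφ : φ ≠ 0)
    {s : Set (Submodule K E)} (hs : s.Finite) (hne : ∀ p ∈ s, p ≠ ⊤) :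
    ∃ c : E, φ c = 1 ∧ ∀ p ∈ s, c ∉ p := by
  obtain ⟨c, hc⟩ := exists_forall_notMem_of_finite (hs.insert (LinearMap.ker φ)) <| by
    rintro p (rfl | hp)
    exacts [LinearMap.ker_eq_top.not.2 hφ, hne p hp]
  have hφc : φ c ≠ 0 := hc _ (Set.mem_insert _ _)
  refine ⟨(φ c)⁻¹ • c, by simp [hφc], fun p hp hcp => hc p (Set.mem_insert_of_mem _ hp) ?_⟩
  exact (smul_mem_iff p (inv_ne_zero hφc)).1 hcp

variable [FiniteDimensional K E]

theorem finrank_sup_span_singleton_inf_le (U Z : Submodule K E) (c : E) :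
    finrank K ↥((U ⊔ K ∙ c) ⊓ Z) ≤ finrank K ↥(U ⊓ Z) + 1 := by
  have hsum := finrank_sup_add_finrank_inf_eq ((U ⊔ K ∙ c) ⊓ Z) U
  have hmeet : (U ⊔ K ∙ c) ⊓ Z ⊓ U = U ⊓ Z := by
    rw [inf_right_comm, inf_eq_right.2 (le_sup_left : U ≤ U ⊔ K ∙ c), inf_comm]
  have hjoin : finrank K ↥((U ⊔ K ∙ c) ⊓ Z ⊔ U) ≤ finrank K U + 1 :=
    calc _ ≤ finrank K ↥(U ⊔ K ∙ c) := finrank_mono (sup_le inf_le_left le_sup_left)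
      _ ≤ finrank K U + finrank K (K ∙ c) := finrank_add_le_finrank_add_finrank _ _
      _ ≤ finrank K U + 1 := by gcongr; exact (finrank_span_le_card {c}).trans (by simp)
  rw [hmeet] at hsum
  omega

/-- The count behind adjoining one generic point `c`: if `U ⊔ Z = ⊤` it raises
`finrank (U ⊓ Z)` by at most one, and otherwise `c ∉ U ⊔ Z` and it changes nothing. -/
theorem finrank_sup_span_singleton_inf_add_le {U Z : Submodule K E} {c : E} {a b n : ℕ}
    (hc : U ⊔ Z ≠ ⊤ → c ∉ U ⊔ Z) (hU : finrank K U ≤ a)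
    (hZ : Z ≠ ⊥ → finrank K Z + n * finrank K E ≤ b + finrank K E)
    (hUZ : U ⊓ Z ≠ ⊥ → finrank K ↥(U ⊓ Z) + (n + 1) * finrank K E ≤ a + b + finrank K E)
    (hne : (U ⊔ K ∙ c) ⊓ Z ≠ ⊥) :
    finrank K ↥((U ⊔ K ∙ c) ⊓ Z) + (n + 1) * finrank K E ≤ a + 1 + b + finrank K E := by
  by_cases htop : U ⊔ Z = ⊤
  · have hdim := finrank_sup_add_finrank_inf_eq U Z
    rw [htop, finrank_top] at hdim
    have hgrow := finrank_sup_span_singleton_inf_le U Z c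
    have hZ' := hZ (ne_bot_of_le_ne_bot hne inf_le_right)
    rw [add_one_mul]
    omega
  · rw [sup_span_singleton_inf_eq_of_notMem (hc htop)] at hne ⊢
    linarith [hUZ hne]

end Submodule

section GeneralPosition

variable (K : Type*) {E V : Type*} [Field K] [AddCommGroup E] [Module K E]

def interSpan (q : V → E) (𝒯 : Finset (Finset V)) : Submodule K E :=
  𝒯.inf fun T => span K (q '' T)

@[simp]
theorem interSpan_empty (q : V → E) : interSpan K q ∅ = ⊤ :=
  inf_empty

@[simp]
theorem interSpan_insert [DecidableEq V] (q : V → E) (T : Finset V) (𝒯 : Finset (Finset V)) :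
    interSpan K q (insert T 𝒯) = span K (q '' T) ⊓ interSpan K q 𝒯 :=
  inf_insert

/-- Equivalently `codim (interSpan K q 𝒯) ≥ ∑ T ∈ 𝒯, (finrank K E - #T)` whenever the
intersection is nonzero: spans of disjoint sets meet as transversally as their sizes allow. -/
def SpansInGeneralPosition (q : V → E) (W : Finset V) : Prop :=
  ∀ 𝒯 ⊆ W.powerset, (𝒯 : Set (Finset V)).PairwiseDisjoint id → interSpan K q 𝒯 ≠ ⊥ →
    finrank K (interSpan K q 𝒯) + #𝒯 * finrank K E ≤ ∑ T ∈ 𝒯, #T + finrank K E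

variable {K}

theorem spansInGeneralPosition_empty (q : V → E) : SpansInGeneralPosition K q ∅ := by
  intro 𝒯 h𝒯 _ hne
  rw [powerset_empty, subset_singleton_iff] at h𝒯
  obtain rfl | rfl := h𝒯
  · rw [interSpan_empty, finrank_top]; simp
  · simp [interSpan] at hne

theorem finrank_span_image_le_card (q : V → E) (A : Finset V) :
    finrank K (span K (q '' A)) ≤ #A := by
  classical
  rw [← coe_image]
  exact (finrank_span_finset_le_card _).trans card_image_le

variable {q : V → E} {W : Finset V}

section Update

variable [DecidableEq V]

theorem SpansInGeneralPosition.finrank_inf_add_le (hq : SpansInGeneralPosition K q W)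
    {A : Finset V} {𝒮 : Finset (Finset V)} (hA : A ⊆ W) (h𝒮 : 𝒮 ⊆ W.powerset)
    (h𝒮disj : (𝒮 : Set (Finset V)).PairwiseDisjoint id) (hA𝒮 : ∀ S ∈ 𝒮, Disjoint A S)
    (hne : span K (q '' A) ⊓ interSpan K q 𝒮 ≠ ⊥) :
    finrank K ↥(span K (q '' A) ⊓ interSpan K q 𝒮) + (#𝒮 + 1) * finrank K E ≤
      #A + ∑ S ∈ 𝒮, #S + finrank K E := by
  have hAne : A.Nonempty := by
    rw [nonempty_iff_ne_empty]
    rintro rfl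
    simp at hne
  have hA𝒮' : A ∉ 𝒮 := fun hA𝒮' => hAne.ne_empty (disjoint_self_iff_empty _ |>.1 (hA𝒮 A hA𝒮'))
  have := hq (insert A 𝒮) (insert_subset (mem_powerset.2 hA) h𝒮)
    (by rw [coe_insert]; exact h𝒮disj.insert fun S hS _ => hA𝒮 S hS) (by rwa [interSpan_insert])
  rwa [interSpan_insert, card_insert_of_notMem hA𝒮', sum_insert hA𝒮'] at this

theorem interSpan_update_of_notMem {a : V} (c : E) (ha : a ∉ W) {𝒮 : Finset (Finset V)}
    (h𝒮 : 𝒮 ⊆ W.powerset) : interSpan K (update q a c) 𝒮 = interSpan K q 𝒮 :=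
  inf_congr rfl fun S hS => by
    rw [Set.image_update_of_notMem q c fun h : a ∈ (S : Set V) => ha (mem_powerset.1 (h𝒮 hS) h)]

theorem SpansInGeneralPosition.update_insert [FiniteDimensional K E]
    (hq : SpansInGeneralPosition K q W) {a : V} {c : E} (ha : a ∉ W)
    (hc : ∀ A ⊆ W, ∀ 𝒮 ⊆ W.powerset, span K (q '' A) ⊔ interSpan K q 𝒮 ≠ ⊤ →
      c ∉ span K (q '' A) ⊔ interSpan K q 𝒮) :
    SpansInGeneralPosition K (update q a c) (insert a W) := by
  intro 𝒯 h𝒯 hdisj hne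
  by_cases ha𝒯 : ∃ T₀ ∈ 𝒯, a ∈ T₀
  swap
  · push Not at ha𝒯
    have h𝒯W : 𝒯 ⊆ W.powerset := fun T hT =>
      mem_powerset.2 <| (subset_insert_iff_of_notMem (ha𝒯 T hT)).1 (mem_powerset.1 (h𝒯 hT))
    rw [interSpan_update_of_notMem c ha h𝒯W] at hne ⊢
    exact hq 𝒯 h𝒯W hdisj hne
  obtain ⟨T₀, hT₀, haT₀⟩ := ha𝒯
  set A := T₀.erase a
  set 𝒮 := 𝒯.erase T₀
  have hT₀𝒮 : ∀ S ∈ 𝒮, Disjoint T₀ S := fun S hS =>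
    hdisj hT₀ (mem_of_mem_erase hS) (ne_of_mem_erase hS).symm
  have hA𝒮 : ∀ S ∈ 𝒮, Disjoint A S := fun S hS => (hT₀𝒮 S hS).mono_left (erase_subset a T₀)
  have hA : A ⊆ W := subset_insert_iff.1 (mem_powerset.1 (h𝒯 hT₀))
  have h𝒮 : 𝒮 ⊆ W.powerset := fun S hS => mem_powerset.2 <|
    (subset_insert_iff_of_notMem (disjoint_left.1 (hT₀𝒮 S hS) haT₀)).1
      (mem_powerset.1 (h𝒯 (mem_of_mem_erase hS)))
  have hspan : interSpan K (update q a c) 𝒯 = (span K (q '' A) ⊔ K ∙ c) ⊓ interSpan K q 𝒮 := by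
    rw [← insert_erase hT₀, interSpan_insert, interSpan_update_of_notMem c ha h𝒮,
      ← insert_erase haT₀, coe_insert, Set.image_insert_eq, update_self, span_insert, sup_comm,
      Set.image_update_of_notMem q c fun h => ha (hA h)]
  have hcard : #𝒯 = #𝒮 + 1 := (card_erase_add_one hT₀).symm
  have hsum : ∑ T ∈ 𝒯, #T = #A + 1 + ∑ S ∈ 𝒮, #S := by
    rw [← add_sum_erase _ _ hT₀, card_erase_add_one haT₀]
  rw [hspan] at hne ⊢
  rw [hcard, hsum]
  exact finrank_sup_span_singleton_inf_add_le (hc A hA 𝒮 h𝒮)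
    (finrank_span_image_le_card q A) (hq 𝒮 h𝒮 (hdisj.subset (erase_subset T₀ 𝒯)))
    (hq.finrank_inf_add_le hA h𝒮 (hdisj.subset (erase_subset T₀ 𝒯)) hA𝒮) hne

end Update

theorem exists_spansInGeneralPosition [Infinite K] [FiniteDimensional K E] {φ : E →ₗ[K] K}
    (hφ : φ ≠ 0) (W : Finset V) :
    ∃ q : V → E, (∀ v, φ (q v) = 1) ∧ SpansInGeneralPosition K q W := by
  classical
  induction W using Finset.induction_on with
  | empty =>
    obtain ⟨c, hc, -⟩ := exists_apply_eq_one_forall_notMem hφ Set.finite_empty (by simp)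
    exact ⟨fun _ => c, fun _ => hc, spansInGeneralPosition_empty _⟩
  | insert a W ha ih =>
    obtain ⟨q, hq1, hq⟩ := ih
    let candidates := (fun A𝒮 : Finset V × Finset (Finset V) =>
      span K (q '' A𝒮.1) ⊔ interSpan K q A𝒮.2) '' ↑(W.powerset ×ˢ W.powerset.powerset)
    obtain ⟨c, hc1, hc⟩ := exists_apply_eq_one_forall_notMem hφ
      (candidates.toFinite.sdiff (t := {⊤})) fun p hp => hp.2
    refine ⟨update q a c, fun v => ?_, hq.update_insert ha fun A hA 𝒮 h𝒮 htop => hc _ ⟨?_, htop⟩⟩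
    · rcases eq_or_ne v a with rfl | hv
      · simpa
      · simpa [hv] using hq1 v
    · exact ⟨(A, 𝒮), mem_product.2 ⟨mem_powerset.2 hA, mem_powerset.2 h𝒮⟩, rfl⟩

theorem SpansInGeneralPosition.iInf_span_eq_bot [FiniteDimensional K E]
    (hq : SpansInGeneralPosition K q W) {ι : Type*} [Fintype ι] {T : ι → Finset V}
    (hTW : ∀ i, T i ⊆ W) (hT : ∀ i, (T i).Nonempty) (hdisj : Pairwise (Disjoint on T))
    (hcard : ∑ i, #(T i) + finrank K E ≤ Fintype.card ι * finrank K E) :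
    ⨅ i, span K (q '' T i) = ⊥ := by
  classical
  have hinj : Injective T := fun i j hij => by
    by_contra hne
    have hself := hdisj hne
    rw [onFun, hij] at hself
    exact (hT j).ne_empty (disjoint_self_iff_empty _ |>.1 hself)
  have hinter : interSpan K q (univ.image T) = ⨅ i, span K (q '' T i) := by
    rw [interSpan, inf_image, inf_univ_eq_iInf]; rfl
  by_contra hne
  rw [← hinter] at hne
  have h𝒯W : univ.image T ⊆ W.powerset := fun S hS => by
    obtain ⟨i, -, rfl⟩ := mem_image.1 hS
    exact mem_powerset.2 (hTW i)
  have h𝒯disj : (↑(univ.image T) : Set (Finset V)).PairwiseDisjoint id := by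
    rintro _ hS _ hS' hSS'
    obtain ⟨i, -, rfl⟩ := mem_image.1 hS
    obtain ⟨j, -, rfl⟩ := mem_image.1 hS'
    exact hdisj fun hij => hSS' (congrArg T hij)
  have := hq _ h𝒯W h𝒯disj hne
  rw [card_image_of_injective _ hinj, sum_image hinj.injOn, card_univ] at this
  exact hne (finrank_eq_zero.1 (by omega))

end GeneralPosition

section TestMap

variable {V : Type*} [Fintype V]

noncomputable def vertexSupport (y : stdSimplex ℝ V) : Finset V := {v | y v ≠ 0}

theorem mem_vertexSupport {y : stdSimplex ℝ V} {v : V} : v ∈ vertexSupport y ↔ y v ≠ 0 := by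
  simp [vertexSupport]

theorem vertexSupport_nonempty (y : stdSimplex ℝ V) : (vertexSupport y).Nonempty := by
  obtain ⟨v, -, hv⟩ :=
    exists_ne_zero_of_sum_ne_zero ((stdSimplex.sum_eq_one y).symm ▸ one_ne_zero)
  exact ⟨v, mem_vertexSupport.2 hv⟩

theorem sum_smul_mem_span_vertexSupport {E : Type*} [AddCommGroup E] [Module ℝ E] (q : V → E)
    (y : stdSimplex ℝ V) : ∑ v, y v • q v ∈ span ℝ (q '' vertexSupport y) := by
  refine sum_mem fun v _ => ?_
  by_cases hv : y v = 0
  · simp [hv]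
  · exact smul_mem _ _ (subset_span ⟨v, mem_vertexSupport.2 hv, rfl⟩)

theorem sum_prod_powersetCard_eq_zero_iff (y : stdSimplex ℝ V) (n : ℕ) :
    ∑ B ∈ powersetCard n univ, ∏ v ∈ B, y v = 0 ↔ #(vertexSupport y) < n := by
  rw [sum_eq_zero_iff_of_nonneg fun B _ => prod_nonneg fun v _ => stdSimplex.zero_le y v]
  simp only [mem_powersetCard, subset_univ, true_and, prod_eq_zero_iff]
  constructor
  · intro h
    by_contra! hn
    obtain ⟨B, hB, hBcard⟩ := exists_subset_card_eq hn
    obtain ⟨v, hv, hv0⟩ := h B hBcard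
    exact mem_vertexSupport.1 (hB hv) hv0
  · intro h B hB
    by_contra! hB0
    have : B ⊆ vertexSupport y := fun v hv => mem_vertexSupport.2 (hB0 v hv)
    exact (card_le_card this).not_gt (hB ▸ h)

variable {d : ℕ} [NeZero d] {k : ℕ} {q : V → Fin d → ℝ}

noncomputable def testMap (k : ℕ) (q : V → Fin d → ℝ) (y : stdSimplex ℝ V) : Fin d → ℝ :=
  update (∑ v, y v • q v) 0 (∑ B ∈ powersetCard (k + 1) univ, ∏ v ∈ B, y v)

theorem continuous_testMap (k : ℕ) (q : V → Fin d → ℝ) : Continuous (testMap k q) := by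
  have hcoord (v : V) : Continuous fun y : stdSimplex ℝ V => y v :=
    (continuous_apply v).comp continuous_subtype_val
  exact (continuous_finsetSum _ fun v _ => (hcoord v).smul continuous_const).update 0
    (continuous_finsetSum _ fun B _ => continuous_finsetProd _ fun v _ => hcoord v)

theorem sum_smul_apply_zero (hq0 : ∀ v, q v 0 = 1) (y : stdSimplex ℝ V) :
    (∑ v, y v • q v) 0 = 1 := by
  simp [hq0]

theorem card_vertexSupport_le_of_testMap_eq {y y' : stdSimplex ℝ V}
    (h : testMap k q y = testMap k q y') (hy : #(vertexSupport y) ≤ k) :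
    #(vertexSupport y') ≤ k := by
  have h0 := congrFun h 0
  simp only [testMap, update_self] at h0
  rw [← Nat.lt_succ_iff, ← sum_prod_powersetCard_eq_zero_iff] at hy ⊢
  rwa [← h0]

theorem sum_smul_eq_of_testMap_eq (hq0 : ∀ v, q v 0 = 1) {y y' : stdSimplex ℝ V}
    (h : testMap k q y = testMap k q y') : ∑ v, y v • q v = ∑ v, y' v • q v := by
  funext j
  rcases eq_or_ne j 0 with rfl | hj
  · rw [sum_smul_apply_zero hq0, sum_smul_apply_zero hq0]
  · simpa [testMap, hj] using congrFun h j

theorem exists_testMap_ne {ι : Type*} [Fintype ι] (hq0 : ∀ v, q v 0 = 1)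
    (hq : SpansInGeneralPosition ℝ q univ) (hk : Fintype.card ι * (k + 1) + d ≤ Fintype.card ι * d)
    {x : ι → stdSimplex ℝ V} (hx : Pairwise (Disjoint on fun i => vertexSupport (x i))) {i₀ : ι}
    (hi₀ : #(vertexSupport (x i₀)) ≤ k + 1) :
    ∃ i, testMap (k + 1) q (x i) ≠ testMap (k + 1) q (x i₀) := by
  by_contra! heq
  have hsupp (i : ι) : #(vertexSupport (x i)) ≤ k + 1 :=
    card_vertexSupport_le_of_testMap_eq (heq i).symm hi₀
  have hbot := hq.iInf_span_eq_bot (fun i => subset_univ _) (fun i => vertexSupport_nonempty (x i))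
    hx <| by
      rw [Module.finrank_fin_fun]
      calc ∑ i, #(vertexSupport (x i)) + d ≤ Fintype.card ι * (k + 1) + d := by
            gcongr
            simpa using sum_le_card_nsmul univ _ _ fun i _ => hsupp i
        _ ≤ Fintype.card ι * d := hk
  have hmem : ∑ v, x i₀ v • q v ∈ ⨅ i, span ℝ (q '' vertexSupport (x i)) :=
    mem_iInf _ |>.2 fun i =>
      sum_smul_eq_of_testMap_eq hq0 (heq i) ▸ sum_smul_mem_span_vertexSupport q (x i)
  rw [hbot, mem_bot] at hmem
  have h1 := sum_smul_apply_zero hq0 (x i₀)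
  rw [hmem] at h1
  exact zero_ne_one h1

end TestMap

theorem Nat.add_mul_le_of_lt_sub_mul_sub {r d k : ℕ} (h : r * k < (r - 1) * (d - 1)) :
    r * (k + 1) + d ≤ r * d := by
  rcases r with _ | r
  · simp at h
  rcases d with _ | d
  · simp at h
  simp only [add_tsub_cancel_right] at h
  nlinarith

theorem prescribable_dim_lower_bound_general (r d : ℕ) (D : Fin r → ℕ) (h : TverbergPrescribable r d D) :
    ∀ i, (r - 1) * (d - 1) ≤ r * D i := by
  intro i₀
  by_contra! hlt
  obtain ⟨N, hN⟩ := h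
  have : NeZero d := ⟨by rintro rfl; simp at hlt⟩
  have hφ : (LinearMap.proj 0 : (Fin d → ℝ) →ₗ[ℝ] ℝ) ≠ 0 := fun h0 => by
    simpa using LinearMap.congr_fun h0 (fun _ => 1)
  obtain ⟨q, hq0, hq⟩ := exists_spansInGeneralPosition hφ (univ : Finset (Fin (N + 1)))
  obtain ⟨S, hS, hScard, x, hxS, hfx⟩ := hN _ (continuous_testMap (D i₀ + 1) q)
  have hxS' (i : Fin r) : vertexSupport (x i) ⊆ S i := fun v hv =>
    hxS i v (mem_vertexSupport.1 hv)
  obtain ⟨i, hi⟩ := exists_testMap_ne hq0 hq (by simpa using Nat.add_mul_le_of_lt_sub_mul_sub hlt)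
    (fun i j hij => (hS hij).mono (hxS' i) (hxS' j)) ((card_le_card (hxS' i₀)).trans (hScard i₀).le)
  exact hi (hfx i i₀)

theorem prescribable_dim_lower_bound (r d : ℕ) (hr : 2 ≤ r) (hd : 1 ≤ d)
    (D : Fin r → ℕ) (h : TverbergPrescribable r d D) :
    ∀ i, (r - 1) * (d - 1) ≤ r * D i :=
  prescribable_dim_lower_bound_general r d D h
end

section
/- Let r ≥ 3 be an integer. For every natural number N there exists a continuous map f : Δ_N → ℝ^3 such that there do NOT exist pairwise disjoint subsets S_1, …, S_r of the vertex set {0,…,N} with |S_1| = 2, |S_2| = 3, |S_i| = 4 for 3 ≤ i ≤ r, together with points x_1, …, x_r ∈ Δ_N with the support of x_i contained in S_i for all i and f(x_1) = f(x_2) = ⋯ = f(x_r). In particular, the r-tuple (1, 2, 3, …, 3) is not Tverberg prescribable for r and d = 3. -/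
/-!
Send `x ∈ Δ_N` to `(G x, H x, E x)`, where `G x = ∑ v x_v`, `E` is the third elementary
symmetric function of the coordinates, and `H x = ∑_{u < v} B^u (v - u)² x_u x_v` with
`B = (N + 1)²`. The first face is an edge, so `E` vanishes at the common image and every `x_i`
lies on an edge `a_i < b_i` of its face, where `H x_i = B^{a_i} (G - a_i) (b_i - G)` for the
common value `G`. The `a_i` are distinct, and comparing `H` with an edge of smaller lower vertex
shows `(G - a_i) (b_i - G) < 1/4`: `G` is within `1/2` of a vertex of every edge except the one
with the least lower vertex. For `r ≥ 3` two such edges lie in disjoint faces, yet both would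
contain the integer nearest to `G`.
-/

open Finset MvPolynomial

namespace TverbergObstruction

section ElementarySymmetric

variable {σ R : Type*} [Fintype σ]

theorem eval_esymm_eq_zero_of_support_subset [CommSemiring R] {x : σ → R} {S : Finset σ}
    {n : ℕ} (hS : Function.support x ⊆ S) (hn : #S < n) : eval x (esymm σ R n) = 0 := by
  simp only [esymm, map_sum, map_prod, eval_X]
  refine sum_eq_zero fun T hT => ?_
  obtain ⟨v, hvT, hvS⟩ : ∃ v ∈ T, v ∉ S := not_subset.mp fun hTS => by
    have := card_le_card hTS
    rw [(mem_powersetCard.mp hT).2] at this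
    omega
  exact prod_eq_zero hvT (Function.notMem_support.mp fun hv => hvS (hS hv))

theorem card_support_lt_of_eval_esymm_eq_zero [CommSemiring R] [LinearOrder R]
    [IsStrictOrderedRing R] {x : σ → R} (hx : ∀ v, 0 ≤ x v) {n : ℕ}
    (h : eval x (esymm σ R n) = 0) : #{v | x v ≠ 0} < n := by
  by_contra! hn
  obtain ⟨T, hT, hTn⟩ := exists_subset_card_eq hn
  simp only [esymm, map_sum, map_prod, eval_X] at h
  have hprod : ∏ v ∈ T, x v = 0 :=
    (sum_eq_zero_iff_of_nonneg fun T _ => prod_nonneg fun v _ => hx v).mp h T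
      (mem_powersetCard.mpr ⟨subset_univ T, hTn⟩)
  exact (prod_pos fun v hv => (hx v).lt_of_ne' (mem_filter.mp (hT hv)).2).ne' hprod

theorem exists_edge_of_eval_esymm_three_eq_zero [LinearOrder σ] {x : σ → ℝ}
    (hx : ∀ v, 0 ≤ x v) (h : eval x (esymm σ ℝ 3) = 0) {S : Finset σ}
    (hxS : Function.support x ⊆ S) (hS : 2 ≤ #S) :
    ∃ a ∈ S, ∃ b ∈ S, a < b ∧ Function.support x ⊆ {a, b} := by
  have hF : ({v | x v ≠ 0} : Finset σ) ⊆ S := fun v hv => hxS (mem_filter.mp hv).2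
  obtain ⟨T, hFT, hTS, hT⟩ := exists_subsuperset_card_eq hF
    (Nat.le_of_lt_succ (card_support_lt_of_eval_esymm_eq_zero hx h)) hS
  obtain ⟨a, b, hne, rfl⟩ := card_eq_two.mp hT
  have hsupp : Function.support x ⊆ {a, b} := fun v hv => by
    simpa using hFT (mem_filter.mpr ⟨mem_univ v, hv⟩)
  rcases hne.lt_or_gt with hab | hba
  · exact ⟨a, hTS (by simp), b, hTS (by simp), hab, hsupp⟩
  · exact ⟨b, hTS (by simp), a, hTS (by simp), hba, Set.pair_comm a b ▸ hsupp⟩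

end ElementarySymmetric

theorem sub_lt_half_or_sub_lt_half_of_pow_mul_eq {B X a b a' b' : ℝ} {k k' : ℕ}
    (hB : (b' - a') ^ 2 < B) (hB1 : 1 ≤ B) (hk : k' < k) (ha : a ≤ X) (hb : X ≤ b)
    (h : B ^ k * ((X - a) * (b - X)) = B ^ k' * ((X - a') * (b' - X))) :
    X - a < 1 / 2 ∨ b - X < 1 / 2 := by
  have hP : 0 ≤ (X - a) * (b - X) := mul_nonneg (by linarith) (by linarith)
  have hP' : 4 * ((X - a') * (b' - X)) ≤ (b' - a') ^ 2 := by
    nlinarith [sq_nonneg (X - a' - (b' - X))]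
  have hBP : B * ((X - a) * (b - X)) ≤ (X - a') * (b' - X) := by
    refine le_of_mul_le_mul_left ?_ (pow_pos (by linarith : (0 : ℝ) < B) k')
    calc B ^ k' * (B * ((X - a) * (b - X))) = B ^ (k' + 1) * ((X - a) * (b - X)) := by ring
      _ ≤ B ^ k * ((X - a) * (b - X)) :=
        mul_le_mul_of_nonneg_right (pow_le_pow_right₀ hB1 hk) hP
      _ = _ := h
  by_contra! hfar
  have hquarter : 1 / 4 ≤ (X - a) * (b - X) := by nlinarith [hfar.1, hfar.2]
  nlinarith

theorem eq_of_abs_sub_lt_half {X : ℝ} {m m' : ℕ} (h : |X - m| < 1 / 2)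
    (h' : |X - m'| < 1 / 2) : m = m' := by
  rw [abs_lt] at h h'
  by_contra hne
  rcases Nat.lt_or_gt_of_ne hne with hlt | hlt
  · have : (m : ℝ) + 1 ≤ m' := by exact_mod_cast hlt
    linarith
  · have : (m' : ℝ) + 1 ≤ m := by exact_mod_cast hlt
    linarith

section Map

variable {N : ℕ}

def vertexMean (N : ℕ) (x : Fin (N + 1) → ℝ) : ℝ :=
  ∑ v : Fin (N + 1), ((v : ℕ) : ℝ) * x v

def edgeHeight (N : ℕ) (x : Fin (N + 1) → ℝ) : ℝ :=
  ∑ p ∈ ({p | p.1 < p.2} : Finset (Fin (N + 1) × Fin (N + 1))),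
    (((N : ℝ) + 1) ^ 2) ^ (p.1 : ℕ) * (((p.2 : ℕ) : ℝ) - (p.1 : ℕ)) ^ 2 * (x p.1 * x p.2)

variable {x : Fin (N + 1) → ℝ} {a b : Fin (N + 1)}

theorem vertexMean_of_support_subset_pair (hx : x ∈ stdSimplex ℝ (Fin (N + 1))) (hab : a < b)
    (hsupp : Function.support x ⊆ {a, b}) :
    vertexMean N x - a = ((b : ℝ) - a) * x b ∧
      (b : ℝ) - vertexMean N x = ((b : ℝ) - a) * x a := by
  have hzero : ∀ v, v ≠ a ∧ v ≠ b → x v = 0 := fun v hv =>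
    Function.notMem_support.mp fun h => by simpa [hv.1, hv.2] using hsupp h
  have hsum : x a + x b = 1 := by
    rw [← hx.2, Fintype.sum_eq_add a b hab.ne hzero]
  have hmean : vertexMean N x = a * x a + b * x b :=
    Fintype.sum_eq_add a b hab.ne fun v hv => by simp only [hzero v hv, mul_zero]
  exact ⟨by linear_combination hmean + (a : ℝ) * hsum,
    by linear_combination -hmean - (b : ℝ) * hsum⟩

theorem edgeHeight_of_support_subset_pair (hx : x ∈ stdSimplex ℝ (Fin (N + 1))) (hab : a < b)
    (hsupp : Function.support x ⊆ {a, b}) :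
    edgeHeight N x =
      (((N : ℝ) + 1) ^ 2) ^ (a : ℕ) * ((vertexMean N x - a) * (b - vertexMean N x)) := by
  obtain ⟨hxa, hbx⟩ := vertexMean_of_support_subset_pair hx hab hsupp
  rw [hxa, hbx]
  refine (sum_eq_single_of_mem (a, b) (by simpa using hab) fun p hp hpab => ?_).trans (by ring)
  suffices x p.1 * x p.2 = 0 by rw [this, mul_zero]
  by_contra h
  obtain ⟨h1, h2⟩ := mul_ne_zero_iff.mp h
  have hp : p.1 < p.2 := by simpa using hp
  rcases hsupp h1 with h1 | h1 <;> rcases hsupp h2 with h2 | h2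
  · exact hp.ne (h1.trans h2.symm)
  · exact hpab (Prod.ext h1 h2)
  · exact hab.not_gt (h1 ▸ h2 ▸ hp)
  · exact hp.ne (h1.trans h2.symm)

theorem exists_near_vertex {y : Fin (N + 1) → ℝ} {c d : Fin (N + 1)}
    (hx : x ∈ stdSimplex ℝ (Fin (N + 1))) (hy : y ∈ stdSimplex ℝ (Fin (N + 1)))
    (hab : a < b) (hcd : c < d) (hxab : Function.support x ⊆ {a, b})
    (hycd : Function.support y ⊆ {c, d}) (hca : c < a)
    (hmean : vertexMean N x = vertexMean N y) (hheight : edgeHeight N x = edgeHeight N y) :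
    ∃ m, (m = a ∨ m = b) ∧ |vertexMean N x - (m : ℕ)| < 1 / 2 := by
  obtain ⟨hxa, hbx⟩ := vertexMean_of_support_subset_pair hx hab hxab
  have hab' : (a : ℝ) ≤ b := by exact_mod_cast hab.le
  have hxa' : 0 ≤ vertexMean N x - a := hxa ▸ mul_nonneg (by linarith) (hx.1 b)
  have hbx' : 0 ≤ (b : ℝ) - vertexMean N x := hbx ▸ mul_nonneg (by linarith) (hx.1 a)
  have hB : ((d : ℝ) - c) ^ 2 < ((N : ℝ) + 1) ^ 2 := by
    have hcd' : (c : ℝ) ≤ d := by exact_mod_cast hcd.le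
    have hd : (d : ℝ) ≤ N := by exact_mod_cast Fin.is_le d
    have hc : (0 : ℝ) ≤ c := Nat.cast_nonneg _
    exact pow_lt_pow_left₀ (by linarith) (by linarith) two_ne_zero
  rw [edgeHeight_of_support_subset_pair hx hab hxab,
    edgeHeight_of_support_subset_pair hy hcd hycd, ← hmean] at hheight
  rcases sub_lt_half_or_sub_lt_half_of_pow_mul_eq hB (one_le_pow₀ (by linarith)) hca
    (sub_nonneg.mp hxa') (sub_nonneg.mp hbx') hheight with h | h
  · exact ⟨a, Or.inl rfl, by rwa [abs_of_nonneg hxa']⟩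
  · exact ⟨b, Or.inr rfl, by rwa [abs_sub_comm, abs_of_nonneg hbx']⟩

theorem continuous_vertexMean : Continuous (vertexMean N) :=
  continuous_finsetSum _ fun _ _ => by fun_prop

theorem continuous_edgeHeight : Continuous (edgeHeight N) :=
  continuous_finsetSum _ fun _ _ => by fun_prop

noncomputable def obstructionMap (N : ℕ) (x : stdSimplex ℝ (Fin (N + 1))) : Fin 3 → ℝ :=
  ![vertexMean N x, edgeHeight N x, eval (x : Fin (N + 1) → ℝ) (esymm (Fin (N + 1)) ℝ 3)]

theorem continuous_obstructionMap (N : ℕ) : Continuous (obstructionMap N) := by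
  refine continuous_pi fun i => ?_
  fin_cases i
  · exact continuous_vertexMean.comp continuous_subtype_val
  · exact continuous_edgeHeight.comp continuous_subtype_val
  · exact (continuous_eval _).comp continuous_subtype_val

end Map

end TverbergObstruction

open TverbergObstruction

/-- For every `r ≥ 3` and every `N` there is a continuous map `f : Δ_N → ℝ³` admitting no
Tverberg partition into `r` pairwise disjoint faces of dimensions `1, 2, 3, …, 3` (i.e. into
vertex sets of sizes `2, 3, 4, …, 4`).  In particular, the `r`-tuple `(1, 2, 3, …, 3)` is not
Tverberg prescribable for `r` and `d = 3`. -/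
theorem not_prescribable_one_two_threes (r : ℕ) (hr : 3 ≤ r) (N : ℕ) :
    ∃ f : (stdSimplex ℝ (Fin (N + 1))) → (Fin 3 → ℝ), Continuous f ∧
      ¬ ∃ S : Fin r → Finset (Fin (N + 1)),
          (Pairwise fun i j => Disjoint (S i) (S j)) ∧
          (∀ i : Fin r,
            (S i).card = if (i : ℕ) = 0 then 2 else if (i : ℕ) = 1 then 3 else 4) ∧
          ∃ x : Fin r → stdSimplex ℝ (Fin (N + 1)),
            (∀ i, ∀ v : Fin (N + 1), (x i : Fin (N + 1) → ℝ) v ≠ 0 → v ∈ S i) ∧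
            (∀ i j, f (x i) = f (x j)) := by
  refine ⟨obstructionMap N, continuous_obstructionMap N, ?_⟩
  rintro ⟨S, hdisj, hcard, x, hsupp, heq⟩
  have hmean i j : vertexMean N (x i) = vertexMean N (x j) := congrFun (heq i j) 0
  have hheight i j : edgeHeight N (x i) = edgeHeight N (x j) := congrFun (heq i j) 1
  have hesymm i : eval (x i : Fin (N + 1) → ℝ) (esymm (Fin (N + 1)) ℝ 3) = 0 := by
    let i₀ : Fin r := ⟨0, by omega⟩
    exact (congrFun (heq i i₀) 2).trans
      (eval_esymm_eq_zero_of_support_subset (hsupp i₀) (by rw [hcard i₀]; simp [i₀]))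
  choose a ha b hb hab hxab using fun i => exists_edge_of_eval_esymm_three_eq_zero (x i).2.1
    (hesymm i) (hsupp i) (by rw [hcard i]; split_ifs <;> omega)
  have : Nonempty (Fin r) := ⟨⟨0, by omega⟩⟩
  obtain ⟨i₀, hi₀⟩ := Finite.exists_min a
  have hnear i (hi : i ≠ i₀) : ∃ m ∈ S i, |vertexMean N (x i) - (m : ℕ)| < 1 / 2 := by
    have hlt : a i₀ < a i := (hi₀ i).lt_of_ne fun h =>
      disjoint_left.mp (hdisj hi.symm) (ha i₀) (h ▸ ha i)
    obtain ⟨m, hm, hmX⟩ := exists_near_vertex (x i).2 (x i₀).2 (hab i) (hab i₀) (hxab i)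
      (hxab i₀) hlt (hmean i i₀) (hheight i i₀)
    exact ⟨m, hm.elim (· ▸ ha i) (· ▸ hb i), hmX⟩
  obtain ⟨i, hi, j, hj, hij⟩ := one_lt_card.mp
    (show 1 < #(univ.erase i₀) by rw [card_erase_of_mem (mem_univ _), card_fin]; omega)
  obtain ⟨m, hm, hmX⟩ := hnear i (ne_of_mem_erase hi)
  obtain ⟨m', hm', hmX'⟩ := hnear j (ne_of_mem_erase hj)
  rw [hmean i j] at hmX
  exact disjoint_left.mp (hdisj hij) hm (Fin.ext (eq_of_abs_sub_lt_half hmX hmX') ▸ hm')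
end

section
/- Let r ≥ 2 and d ≥ 1 be integers and let d_1, …, d_r be nonnegative integers with d_1 + ⋯ + d_r = (r−1)d and ⌊d/2⌋ ≤ d_i ≤ d for all i. Then there exists a colorful partition of {1, 2, …, (r−1)(d+1)+1} into r parts X_1, …, X_r with |X_i| = d_i + 1 for all i; that is, a partition such that for every k with 1 ≤ k ≤ d+1 the set Y_k = {(r−1)(k−1)+1, (r−1)(k−1)+2, …, (r−1)k+1} satisfies |Y_k ∩ X_i| = 1 for all i ∈ {1, …, r}. -/
/-!
Write `e = r - 1`, so that the blocks `Y_{k+1} = [e k + 1, e (k+1) + 1]` overlap exactly in the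
points `e k + 1`. Colour these overlap points along a walk `c 0, c 1, …` on the colours
`0, …, e` that never stays put, and give the `e - 1` inner points of the block between `e k + 1`
and `e (k+1) + 1` the colours other than `c k` and `c (k+1)`, in increasing order. Then every
block sees every colour exactly once, and summing over the `d + 1` blocks counts colour `i` once
too often at each inner overlap point `e k + 1` (`1 ≤ k ≤ d`) coloured `i`. So the class of `i`
has `d + 1 - mᵢ` points if the walk visits `i` exactly `mᵢ = d - dᵢ` times in steps `1, …, d`.
Such a walk exists because `∑ mᵢ = d` and `2 mᵢ ≤ d + 1`: step greedily to the most frequent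
remaining colour other than the current one.
-/

open Finset

namespace ColorfulPartition

theorem card_filter_range_succ {α : Type*} (n : ℕ) (c : ℕ → α) (p : α → Prop)
    [DecidablePred p] :
    #{k ∈ range (n + 1) | p (c k)} =
      #{k ∈ range n | p (c (k + 1))} + if p (c 0) then 1 else 0 := by
  simp only [card_filter]
  exact sum_range_succ' _ n

theorem card_filter_eq_one_of_injOn {α β : Type*} [DecidableEq β] {s : Finset α}
    {t : Finset β} {f : α → β} (hf : Set.MapsTo f s t) (hinj : Set.InjOn f s) (hst : #t ≤ #s)
    {b : β} (hb : b ∈ t) :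
    #{a ∈ s | f a = b} = 1 := by
  obtain ⟨a, ha, rfl⟩ := surjOn_of_injOn_of_card_le f hf hinj hst hb
  refine card_eq_one.2 ⟨a, ext fun a' => ?_⟩
  simp only [mem_filter, mem_singleton]
  exact ⟨fun h => hinj h.1 ha h.2, by rintro rfl; exact ⟨ha, rfl⟩⟩

theorem sum_card_filter_blocks (e : ℕ) (p : ℕ → Prop) [DecidablePred p] (K : ℕ) :
    ∑ k ∈ range (K + 1), #{x ∈ Icc (e * k + 1) (e * (k + 1) + 1) | p x} =
      #{x ∈ Icc 1 (e * (K + 1) + 1) | p x} + #{k ∈ range K | p (e * (k + 1) + 1)} := by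
  induction K with
  | zero => simp
  | succ K ih =>
    set a := e * (K + 1) + 1
    have hab : a ≤ e * (K + 2) + 1 :=
      Nat.add_le_add_right (Nat.mul_le_mul_left e (by omega)) 1
    have hsplit : Icc 1 (e * (K + 2) + 1) = Icc 1 a ∪ Ioc a (e * (K + 2) + 1) := by
      ext x
      simp only [mem_union, mem_Icc, mem_Ioc]
      omega
    have hdisj : Disjoint (Icc 1 a) (Ioc a (e * (K + 2) + 1)) :=
      disjoint_left.2 fun x hx hx' => by simp only [mem_Icc, mem_Ioc] at hx hx'; omega
    rw [sum_range_succ, ih, ← Ioc_insert_left hab, filter_insert, hsplit, filter_union,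
      card_union_of_disjoint (disjoint_filter_filter hdisj), range_add_one, filter_insert]
    split_ifs
    · rw [card_insert_of_notMem (by simp), card_insert_of_notMem (by simp)]
      omega
    · omega

theorem exists_walk_count_eq {α : Type*} [Fintype α] [DecidableEq α] [Nontrivial α]
    (n : ℕ) (m : α → ℕ) (j : α)
    (hsum : ∑ a, m a = n) (hm : ∀ a, 2 * m a ≤ n + 1) (hj : 2 * m j ≤ n) :
    ∃ c : ℕ → α, c 0 = j ∧ (∀ k, c k ≠ c (k + 1)) ∧
      ∀ a, #{k ∈ range n | c (k + 1) = a} = m a := by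
  induction n generalizing m j with
  | zero =>
    obtain ⟨j', hj'⟩ := exists_ne j
    refine ⟨fun k => if Even k then j else j', by simp, fun k => ?_, fun a => ?_⟩
    · rcases Nat.even_or_odd k with hk | hk <;>
        simp [hk, Nat.not_even_iff_odd.mpr, hj', hj'.symm]
    · simp [(sum_eq_zero_iff.mp hsum) a (mem_univ a)]
  | succ n ih =>
    obtain ⟨i₀, hi₀j, hi₀⟩ : ∃ i ≠ j, 0 < m i := by
      by_contra! h
      have : ∑ a, m a = m j :=
        sum_eq_single j (fun a _ ha => Nat.eq_zero_of_le_zero (h a ha)) (by simp)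
      omega
    obtain ⟨i, hi, hi_max⟩ := exists_max_image (univ.erase j) m ⟨i₀, by simpa using hi₀j⟩
    have hij : i ≠ j := (mem_erase.mp hi).1
    have hi_pos : 0 < m i := hi₀.trans_le (hi_max i₀ (by simpa using hi₀j))
    set m' := Function.update m i (m i - 1) with hm'
    have hm'_sum : ∑ a, m' a = n := by
      have := sum_eq_add_sum_sdiff_singleton_of_mem (mem_univ i) m
      rw [hm', sum_update_of_mem (mem_univ i)]
      omega
    have hm'_le : ∀ a, 2 * m' a ≤ n + 1 := fun a => by
      rcases eq_or_ne a i with rfl | hai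
      · have := hm a
        simp only [hm', Function.update_self]
        omega
      rw [hm', Function.update_of_ne hai]
      rcases eq_or_ne a j with rfl | haj
      · exact hj
      have hpair : m a + m i ≤ n + 1 := by
        rw [← hsum, ← sum_pair hai]
        exact sum_le_sum_of_subset (subset_univ _)
      have := hi_max a (by simpa using haj)
      omega
    have hm'_i : 2 * m' i ≤ n := by
      have := hm i
      simp only [hm', Function.update_self]
      omega
    obtain ⟨c, hc0, hc_ne, hc_count⟩ := ih m' i hm'_sum hm'_le hm'_i
    let c' : ℕ → α := fun | 0 => j | k + 1 => c k
    refine ⟨c', rfl, fun | 0 => by simp [c', hc0, hij.symm] | k + 1 => hc_ne k, fun a => ?_⟩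
    change #{k ∈ range (n + 1) | c k = a} = m a
    rw [card_filter_range_succ n c (· = a), hc_count, hc0]
    rcases eq_or_ne i a with rfl | hai
    · simp only [hm', Function.update_self, ↓reduceIte]
      omega
    · simp [hm', hai, Ne.symm hai]

theorem exists_walk_count_eq_sub {r d : ℕ} (hr : 2 ≤ r) (D : Fin r → ℕ)
    (hsum : ∑ i, D i = (r - 1) * d) (hlow : ∀ i, d / 2 ≤ D i) (hup : ∀ i, D i ≤ d) :
    ∃ w : ℕ → Fin r, (∀ k, w k ≠ w (k + 1)) ∧
      ∀ i, #{k ∈ range d | w (k + 1) = i} = d - D i := by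
  have : Nontrivial (Fin r) := Fin.nontrivial_iff_two_le.2 hr
  have hm_sum : ∑ i, (d - D i) = d := by
    have h₁ : ∑ i, (d - D i) + (r - 1) * d = r * d := by
      rw [← hsum, ← sum_add_distrib]
      simp [Nat.sub_add_cancel (hup _)]
    have h₂ : (r - 1) * d + d = r * d := by rw [← add_one_mul, Nat.sub_add_cancel (by omega)]
    omega
  obtain ⟨j, -, hj⟩ : ∃ j ∈ univ, 2 * (d - D j) ≤ d := exists_le_of_sum_le univ_nonempty <| by
    rw [← mul_sum, hm_sum, sum_const, card_univ, Fintype.card_fin, smul_eq_mul]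
    exact Nat.mul_le_mul_right d hr
  obtain ⟨w, -, hw_ne, hw_count⟩ :=
    exists_walk_count_eq d (fun i => d - D i) j hm_sum (fun i => by have := hlow i; omega) hj
  exact ⟨w, hw_ne, hw_count⟩

/-- For `a ≠ b`, `skipTwo a b` enumerates `ℕ \ {a, b}` in increasing order. -/
def skipTwo (a b j : ℕ) : ℕ :=
  if j < min a b then j else if j + 1 < max a b then j + 1 else j + 2

def blockColor (e a b s : ℕ) : ℕ :=
  if s = 0 then a else if s = e then b else skipTwo a b (s - 1)

theorem blockColor_lt {e a b s : ℕ} (ha : a < e + 1) (hb : b < e + 1) (hs : s ≤ e) :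
    blockColor e a b s < e + 1 := by
  unfold blockColor skipTwo
  split_ifs <;> omega

theorem blockColor_injOn {e a b : ℕ} (hab : a ≠ b) :
    Set.InjOn (blockColor e a b) (Set.Iic e) := by
  intro s hs t ht hst
  simp only [Set.mem_Iic] at hs ht
  unfold blockColor skipTwo at hst
  split_ifs at hst <;> omega

/-- `c k` is the colour of the overlap point `e k + 1`; the point `x = e k + 1 + s` with
`0 < s < e` is the `s`-th point of the block between `e k + 1` and `e (k+1) + 1`. -/
def colorAt (e : ℕ) (c : ℕ → ℕ) (x : ℕ) : ℕ :=
  blockColor e (c ((x - 1) / e)) (c ((x - 1) / e + 1)) ((x - 1) % e)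

section Coloring

variable {e : ℕ} {c : ℕ → ℕ}

theorem colorAt_lt (he : 0 < e) (hc : ∀ k, c k < e + 1) (x : ℕ) : colorAt e c x < e + 1 :=
  blockColor_lt (hc _) (hc _) (Nat.mod_lt _ he).le

theorem colorAt_of_mem_Icc (he : 0 < e) {k x : ℕ}
    (hx : x ∈ Icc (e * k + 1) (e * (k + 1) + 1)) :
    colorAt e c x = blockColor e (c k) (c (k + 1)) (x - (e * k + 1)) := by
  obtain ⟨s, rfl⟩ : ∃ s, x = e * k + 1 + s := ⟨x - (e * k + 1), by rw [mem_Icc] at hx; omega⟩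
  have hs : s ≤ e := by rw [mem_Icc, mul_add_one] at hx; omega
  rw [Nat.add_sub_cancel_left, colorAt, show e * k + 1 + s - 1 = e * k + s by omega]
  rcases hs.lt_or_eq with hs | rfl
  · rw [Nat.mul_add_div he, Nat.div_eq_of_lt hs, Nat.mul_add_mod, Nat.mod_eq_of_lt hs, add_zero]
  · rw [← mul_add_one, Nat.mul_div_cancel_left _ he, Nat.mul_mod_right]
    simp [blockColor, he.ne']

theorem colorAt_mul_add_one (he : 0 < e) (k : ℕ) : colorAt e c (e * k + 1) = c k := by
  rw [colorAt_of_mem_Icc he (k := k) (by simp [mul_add_one]), Nat.sub_self, blockColor,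
    if_pos rfl]

theorem card_filter_block_colorAt_eq_one (he : 0 < e) (hlt : ∀ k, c k < e + 1)
    (hne : ∀ k, c k ≠ c (k + 1)) (k : ℕ) {i : ℕ} (hi : i < e + 1) :
    #{x ∈ Icc (e * k + 1) (e * (k + 1) + 1) | colorAt e c x = i} = 1 := by
  refine card_filter_eq_one_of_injOn (t := range (e + 1)) (fun x _ => ?_)
    (fun x hx y hy hxy => ?_) ?_ (mem_range.2 hi)
  · exact mem_range.2 (colorAt_lt he hlt x)
  · rw [mem_coe, mem_Icc] at hx hy
    rw [colorAt_of_mem_Icc he (mem_Icc.2 hx), colorAt_of_mem_Icc he (mem_Icc.2 hy)] at hxy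
    have := blockColor_injOn (hne k) (by simp only [Set.mem_Iic, mul_add_one] at *; omega)
      (by simp only [Set.mem_Iic, mul_add_one] at *; omega) hxy
    omega
  · simp only [card_range, Nat.card_Icc, mul_add_one]
    omega

theorem card_filter_colorAt_add_card_filter (he : 0 < e) (hlt : ∀ k, c k < e + 1)
    (hne : ∀ k, c k ≠ c (k + 1)) (K : ℕ) {i : ℕ} (hi : i < e + 1) :
    #{x ∈ Icc 1 (e * (K + 1) + 1) | colorAt e c x = i} + #{k ∈ range K | c (k + 1) = i} =
      K + 1 := by
  have := sum_card_filter_blocks e (colorAt e c · = i) K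
  simp only [card_filter_block_colorAt_eq_one he hlt hne _ hi, colorAt_mul_add_one he,
    sum_const, card_range, smul_eq_mul, mul_one] at this
  exact this.symm

end Coloring

end ColorfulPartition

open ColorfulPartition in
theorem colorful_partition_exists_general (r d : ℕ) (hr : 2 ≤ r)
    (D : Fin r → ℕ) (hsum : ∑ i, D i = (r - 1) * d)
    (hlow : ∀ i, d / 2 ≤ D i) (hup : ∀ i, D i ≤ d) :
    ∃ X : Fin r → Finset ℕ,
      (Pairwise fun i j => Disjoint (X i) (X j)) ∧
      (∀ x : ℕ, x ∈ Finset.Icc 1 ((r - 1) * (d + 1) + 1) ↔ ∃ i, x ∈ X i) ∧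
      (∀ i, (X i).card = D i + 1) ∧
      (∀ k : ℕ, 1 ≤ k → k ≤ d + 1 → ∀ i,
        (Finset.Icc ((r - 1) * (k - 1) + 1) ((r - 1) * k + 1) ∩ X i).card = 1) := by
  obtain ⟨w, hw_ne, hw_count⟩ := exists_walk_count_eq_sub hr D hsum hlow hup
  obtain ⟨e, rfl⟩ : ∃ e, r = e + 1 := ⟨r - 1, by omega⟩
  simp only [Nat.add_sub_cancel]
  have he : 0 < e := by omega
  set c : ℕ → ℕ := fun k => w k
  have hlt : ∀ k, c k < e + 1 := fun k => (w k).isLt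
  have hne : ∀ k, c k ≠ c (k + 1) := fun k => Fin.val_injective.ne (hw_ne k)
  refine ⟨fun i => {x ∈ Icc 1 (e * (d + 1) + 1) | colorAt e c x = i}, ?_, ?_, ?_, ?_⟩
  · exact fun i i' hii' => disjoint_filter.2 fun x _ h h' => hii' (Fin.ext (h.symm.trans h'))
  · intro x
    simp only [mem_filter]
    exact ⟨fun hx => ⟨⟨colorAt e c x, colorAt_lt he hlt x⟩, hx, rfl⟩, fun ⟨_, hx, _⟩ => hx⟩
  · intro i
    have hcount : #{k ∈ range d | c (k + 1) = i} = d - D i := by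
      simpa [c, Fin.val_inj] using hw_count i
    have := card_filter_colorAt_add_card_filter he hlt hne d i.isLt
    have := hup i
    dsimp only
    omega
  · rintro (_ | k) hk hkd i
    · omega
    rw [Nat.add_sub_cancel, inter_filter, inter_eq_left.2 (Icc_subset_Icc (by omega)
      (Nat.add_le_add_right (Nat.mul_le_mul_left e hkd) 1))]
    exact card_filter_block_colorAt_eq_one he hlt hne k i.isLt

/-- For `r ≥ 2`, `d ≥ 1`, and nonnegative integers `d₁, …, d_r` with `∑ dᵢ = (r-1)d` and
`⌊d/2⌋ ≤ dᵢ ≤ d`, there is a colorful partition of `{1, …, (r-1)(d+1)+1}` into `r` parts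
`X₁, …, X_r` with `|Xᵢ| = dᵢ + 1`: for every `1 ≤ k ≤ d+1` the block
`Y_k = {(r-1)(k-1)+1, …, (r-1)k+1}` meets each `Xᵢ` in exactly one element. -/
theorem colorful_partition_exists (r d : ℕ) (hr : 2 ≤ r) (hd : 1 ≤ d)
    (D : Fin r → ℕ) (hsum : ∑ i, D i = (r - 1) * d)
    (hlow : ∀ i, d / 2 ≤ D i) (hup : ∀ i, D i ≤ d) :
    ∃ X : Fin r → Finset ℕ,
      (Pairwise fun i j => Disjoint (X i) (X j)) ∧
      (∀ x : ℕ, x ∈ Finset.Icc 1 ((r - 1) * (d + 1) + 1) ↔ ∃ i, x ∈ X i) ∧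
      (∀ i, (X i).card = D i + 1) ∧
      (∀ k : ℕ, 1 ≤ k → k ≤ d + 1 → ∀ i,
        (Finset.Icc ((r - 1) * (k - 1) + 1) ((r - 1) * k + 1) ∩ X i).card = 1) :=
  colorful_partition_exists_general r d hr D hsum hlow hup
end

section
/- Let d ≥ 1 and r ≥ 1 be integers and let c_1 ≥ c_2 ≥ ⋯ ≥ c_r ≥ 0 be nonnegative integers with c_1 + ⋯ + c_r = d, c_1 ≤ ⌈d/2⌉, and c_i ≤ ⌊d/2⌋ for all i ≥ 2. Then the set {1, 2, …, d} can be partitioned into (possibly empty) subsets A_1, …, A_r with |A_i| = c_i for all i such that no A_i contains two consecutive integers. -/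
/-- For `d ≥ 1`, `r ≥ 1`, and nonincreasing nonnegative integers `c₁ ≥ … ≥ c_r` with
`∑ cᵢ = d`, `c₁ ≤ ⌈d/2⌉`, and `cᵢ ≤ ⌊d/2⌋` for `i ≥ 2`, the set `{1, …, d}` can be
partitioned into (possibly empty) parts `A₁, …, A_r` with `|Aᵢ| = cᵢ` such that no part
contains two consecutive integers. -/
theorem partition_no_consecutive (d r : ℕ) (hd : 1 ≤ d) (hr : 1 ≤ r)
    (c : Fin r → ℕ) (hmono : ∀ i j : Fin r, i ≤ j → c j ≤ c i)
    (hsum : ∑ i, c i = d)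
    (hfirst : ∀ i : Fin r, (i : ℕ) = 0 → c i ≤ (d + 1) / 2)
    (hrest : ∀ i : Fin r, 1 ≤ (i : ℕ) → c i ≤ d / 2) :
    ∃ A : Fin r → Finset ℕ,
      (Pairwise fun i j => Disjoint (A i) (A j)) ∧
      (∀ x : ℕ, x ∈ Finset.Icc 1 d ↔ ∃ i, x ∈ A i) ∧
      (∀ i, (A i).card = c i) ∧
      (∀ i, ∀ a ∈ A i, a + 1 ∉ A i) := by
  set m := (d + 1) / 2 with hm
  set c' : ℕ → ℕ := fun j => if h : j < r then c ⟨j, h⟩ else 0 with hc'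
  set P : ℕ → ℕ := fun n => ∑ j ∈ Finset.range n, c' j with hPdef
  set s0 : ℕ → ℕ := fun k => if k < m then 2 * k + 1 else 2 * (k - m) + 2 with hs0def
  have hc'eq : ∀ i : Fin r, c' (i : ℕ) = c i := fun i => by
    simp [hc', i.isLt]
  have hcm : ∀ i : Fin r, c i ≤ m := by
    intro i
    rcases Nat.eq_zero_or_pos (i : ℕ) with h | h
    · exact hfirst i h
    · exact le_trans (hrest i h) (by omega)
  have hPmono : ∀ a b : ℕ, a ≤ b → P a ≤ P b := by
    intro a b hab
    exact Finset.sum_le_sum_of_subset (Finset.range_subset_range.2 hab)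
  have hPr : P r = d := by
    simp only [hPdef]
    rw [← hsum, ← Fin.sum_univ_eq_sum_range]
    exact Finset.sum_congr rfl fun i _ => hc'eq i
  have hPstep : ∀ i : Fin r, P ((i : ℕ) + 1) = P i + c i := by
    intro i
    simp only [hPdef]
    rw [Finset.sum_range_succ, hc'eq]
  have hPle : ∀ i : Fin r, P i + c i ≤ d := by
    intro i
    rw [← hPstep, ← hPr]
    exact hPmono _ _ i.isLt
  -- injectivity of s0
  have hinj : ∀ k k' : ℕ, s0 k = s0 k' → k = k' := by
    intro k k'
    simp only [hs0def]
    by_cases hk : k < m <;> by_cases hk' : k' < m <;> simp [hk, hk'] <;> omega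
  -- range of s0 on [0, d)
  have hrange : ∀ k : ℕ, k < d → 1 ≤ s0 k ∧ s0 k ≤ d := by
    intro k hk
    simp only [hs0def]
    split <;> omega
  -- surjectivity onto [1, d]
  have hsurj : ∀ x : ℕ, 1 ≤ x → x ≤ d → ∃ k, k < d ∧ s0 k = x := by
    intro x hx1 hx2
    rcases Nat.even_or_odd x with he | ho
    · refine ⟨m + x / 2 - 1, by omega, ?_⟩
      have hxe : x % 2 = 0 := Nat.even_iff.mp he
      simp only [hs0def]
      rw [if_neg (by omega)]
      omega
    · refine ⟨x / 2, by omega, ?_⟩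
      have hxo : x % 2 = 1 := Nat.odd_iff.mp ho
      simp only [hs0def]
      rw [if_pos (by omega)]
      omega
  -- bound on P i when i ≥ 1
  have hP1 : ∀ i : Fin r, 1 ≤ (i : ℕ) → c ⟨0, hr⟩ ≤ P i := by
    intro i hi
    have h0 : (0 : ℕ) ∈ Finset.range (i : ℕ) := Finset.mem_range.2 hi
    have h2 : c' 0 ≤ P i := Finset.single_le_sum (f := c') (fun _ _ => Nat.zero_le _) h0
    have h3 : c' 0 = c ⟨0, hr⟩ := by simp only [hc']; exact dif_pos hr
    rwa [h3] at h2
  refine ⟨fun i => (Finset.Ico (P i) (P i + c i)).image s0, ?_, ?_, ?_, ?_⟩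
  · -- pairwise disjoint
    intro i j hij
    rw [Finset.disjoint_left]
    rintro x hx hx'
    simp only [Finset.mem_image, Finset.mem_Ico] at hx hx'
    obtain ⟨k, hk, hks⟩ := hx
    obtain ⟨k', hk', hks'⟩ := hx'
    have hkk : k = k' := hinj k k' (hks.trans hks'.symm)
    subst hkk
    -- intervals of distinct i, j are disjoint
    rcases lt_or_gt_of_ne hij with h | h
    · have : P i + c i ≤ P j := by
        rw [← hPstep i]
        exact hPmono _ _ (by exact_mod_cast Fin.lt_iff_val_lt_val.mp h)
      omega
    · have : P j + c j ≤ P i := by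
        rw [← hPstep j]
        exact hPmono _ _ (by exact_mod_cast Fin.lt_iff_val_lt_val.mp h)
      omega
  · -- cover
    intro x
    simp only [Finset.mem_Icc, Finset.mem_image, Finset.mem_Ico]
    constructor
    · rintro ⟨hx1, hx2⟩
      obtain ⟨k, hkd, hks⟩ := hsurj x hx1 hx2
      -- find i with P i ≤ k < P i + c i
      have hex : ∃ i : Fin r, P i ≤ k ∧ k < P i + c i := by
        by_contra hcon
        push_neg at hcon
        -- show by induction that P n ≤ k → k ≥ P n for all n... use: ∀ n ≤ r, P n ≤ k
        have key : ∀ n : ℕ, n ≤ r → P n ≤ k := by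
          intro n
          induction n with
          | zero => intro _; simp [hPdef]
          | succ t ih =>
            intro ht
            have htr : t < r := by omega
            have hPt : P t ≤ k := ih (by omega)
            have := hcon ⟨t, htr⟩ hPt
            rw [hPstep ⟨t, htr⟩] at *
            omega
        have := key r le_rfl
        rw [hPr] at this
        omega
      obtain ⟨i, h1, h2⟩ := hex
      exact ⟨i, ⟨k, ⟨h1, h2⟩, hks⟩⟩
    · rintro ⟨i, k, ⟨hk1, hk2⟩, hks⟩
      have hkd : k < d := by have := hPle i; omega
      have := hrange k hkd
      omega
  · -- cardinality
    intro i
    rw [Finset.card_image_of_injOn fun a _ b _ h => hinj a b h]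
    rw [Nat.card_Ico]
    omega
  · -- no consecutive
    intro i a ha ha'
    simp only [Finset.mem_image, Finset.mem_Ico] at ha ha'
    obtain ⟨k, ⟨hk1, hk2⟩, hks⟩ := ha
    obtain ⟨k', ⟨hk1', hk2'⟩, hks'⟩ := ha'
    have hci : c i ≤ m := hcm i
    -- s0 k' = s0 k + 1
    have heq : s0 k' = s0 k + 1 := by rw [hks, hks']
    by_cases hk : k < m <;> by_cases hk' : k' < m
    · simp only [hs0def, if_pos hk, if_pos hk'] at heq; omega
    · -- k < m ≤ k' : 2(k'-m)+2 = 2k+2 → k' = k + m, interval too long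
      simp only [hs0def, if_pos hk, if_neg hk'] at heq
      omega
    · -- k' < m ≤ k : 2k'+1 = 2(k-m)+3 → k = k' + m - 1
      simp only [hs0def, if_neg hk, if_pos hk'] at heq
      have hkeq : k = k' + m - 1 := by omega
      -- c i ≥ k - k' + 1 = m, so c i = m
      have hcge : m ≤ c i := by omega
      rcases Nat.eq_zero_or_pos (i : ℕ) with h0 | h1
      · -- i = 0 : P i = 0, interval ⊆ [0, m), but k ≥ m
        have : P i = 0 := by
          have : (i : ℕ) = 0 := h0
          simp [hPdef, this]
        omega
      · have h00 : c i ≤ c ⟨0, hr⟩ := hmono ⟨0, hr⟩ i (by simp [Fin.le_def])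
        have := hP1 i h1
        omega
    · simp only [hs0def, if_neg hk, if_neg hk'] at heq; omega
end

section
/- Let r ≥ 2 and d ≥ 1 be integers and let (d_1, …, d_r) be an r-tuple of nonnegative integers that is affinely Tverberg prescribable for r and d. Then d_i ≥ ⌊d/2⌋ for every i ∈ {1, …, r}. -/
/-!
On the moment curve `t ↦ (t, t², …, t^d)`, for a finite parameter set `S` with `2|S| ≤ d` the
polynomial `∏_{s ∈ S} (t - s)²` has degree at most `d`, so it is the restriction of an affine
functional to the curve. That functional vanishes on the points of `S` and is positive at every
other point of the curve, so the convex hull of the points of `S` misses the convex hull of any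
other points of the curve. If `D i < ⌊d/2⌋`, then `2 (D i + 1) ≤ d`, and no Tverberg partition with
these prescribed sizes exists among arbitrarily many points of the curve.
-/

/-- An `r`-tuple `D` of nonnegative integers is affinely Tverberg prescribable for `r` and `d`
if there is an `N` such that every finite set `X` of at least `N` points in `ℝ^d` contains
`r` pairwise disjoint subsets `X₁, …, X_r` with `|Xᵢ| = D i + 1` whose convex hulls have a
common point. -/
def AffinelyTverbergPrescribable (r d : ℕ) (D : Fin r → ℕ) : Prop :=
  ∃ N : ℕ, ∀ X : Finset (Fin d → ℝ), N ≤ X.card →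
    ∃ Y : Fin r → Finset (Fin d → ℝ),
      (∀ i, Y i ⊆ X) ∧
      (Pairwise fun i j => Disjoint (Y i) (Y j)) ∧
      (∀ i, (Y i).card = D i + 1) ∧
      (⋂ i, convexHull ℝ ((Y i : Set (Fin d → ℝ)))).Nonempty

open Polynomial

section MomentCurve

variable {R : Type*} [CommRing R]

def momentCurve (d : ℕ) (t : R) : Fin d → R := fun k => t ^ (k.val + 1)

theorem momentCurve_injective {d : ℕ} (hd : 0 < d) : Function.Injective (momentCurve (R := R) d) :=
  fun a b hab => by simpa [momentCurve] using congrFun hab ⟨0, hd⟩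

theorem exists_affineMap_comp_momentCurve_eq_eval {d : ℕ} (q : R[X]) (hq : q.natDegree ≤ d) :
    ∃ f : (Fin d → R) →ᵃ[R] R, ∀ t, f (momentCurve d t) = q.eval t := by
  refine ⟨(∑ k : Fin d, q.coeff (k + 1) • LinearMap.proj k).toAffineMap +
    AffineMap.const R _ (q.coeff 0), fun t => ?_⟩
  rw [eval_eq_sum_range' (Nat.lt_succ_of_le hq), Finset.sum_range_succ',
    ← Fin.sum_univ_eq_sum_range]
  simp [momentCurve, mul_comm]

end MomentCurve

section OrderedField

variable {𝕜 : Type*} [Field 𝕜] [LinearOrder 𝕜] [IsStrictOrderedRing 𝕜]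

theorem disjoint_convexHull_of_affineMap {E : Type*} [AddCommGroup E] [Module 𝕜 E]
    (f : E →ᵃ[𝕜] 𝕜) {s t : Set E} (hs : ∀ x ∈ s, f x ≤ 0) (ht : ∀ x ∈ t, 0 < f x) :
    Disjoint (convexHull 𝕜 s) (convexHull 𝕜 t) := by
  have hs' : convexHull 𝕜 s ⊆ f ⁻¹' Set.Iic 0 :=
    convexHull_min hs ((convex_Iic 0).affine_preimage f)
  have ht' : convexHull 𝕜 t ⊆ f ⁻¹' Set.Ioi 0 :=
    convexHull_min ht ((convex_Ioi 0).affine_preimage f)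
  exact ((Set.Iic_disjoint_Ioi le_rfl).preimage f).mono hs' ht'

theorem disjoint_convexHull_momentCurve {d : ℕ} {S T : Finset 𝕜} (hST : Disjoint S T)
    (hS : 2 * S.card ≤ d) :
    Disjoint (convexHull 𝕜 (momentCurve d '' (S : Set 𝕜)))
      (convexHull 𝕜 (momentCurve d '' (T : Set 𝕜))) := by
  set p : 𝕜[X] := ∏ s ∈ S, (X - C s)
  obtain ⟨f, hf⟩ := exists_affineMap_comp_momentCurve_eq_eval (d := d) (p ^ 2)
    (by simpa [p, mul_comm] using hS)
  have hf_curve (t : 𝕜) : f (momentCurve d t) = (∏ s ∈ S, (t - s)) ^ 2 := by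
    simp [hf, p, eval_prod]
  refine disjoint_convexHull_of_affineMap f ?_ ?_
  · rintro _ ⟨s, hs, rfl⟩
    rw [hf_curve, Finset.prod_eq_zero hs (sub_self s)]
    simp
  · rintro _ ⟨t, ht, rfl⟩
    rw [hf_curve]
    exact sq_pos_of_ne_zero <| Finset.prod_ne_zero_iff.mpr fun s hs =>
      sub_ne_zero.mpr fun hts => Finset.disjoint_left.mp hST hs (hts ▸ ht)

end OrderedField

theorem affinely_prescribable_lower_bound_general (r d : ℕ) (hr : 2 ≤ r)
    (D : Fin r → ℕ) (h : AffinelyTverbergPrescribable r d D) :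
    ∀ i, d / 2 ≤ D i := by
  intro i
  by_contra! hlt
  have hd : 0 < d := by omega
  obtain ⟨j, hji⟩ : ∃ j, j ≠ i :=
    Fintype.exists_ne_of_one_lt_card (by rw [Fintype.card_fin]; omega) i
  obtain ⟨N, hN⟩ := h
  set P : Finset ℝ := (Finset.range N).image Nat.cast
  have hP : P.card = N := by
    rw [Finset.card_image_of_injective _ Nat.cast_injective, Finset.card_range]
  have hγ : Function.Injective (momentCurve (R := ℝ) d) := momentCurve_injective hd
  obtain ⟨Y, hYX, hYdisj, hYcard, hYhull⟩ :=
    hN (P.image (momentCurve d)) (by rw [Finset.card_image_of_injective _ hγ, hP])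
  choose S _ hS using fun k => Finset.subset_image_iff.mp (hYX k)
  have hdisj : Disjoint (S i) (S j) := by
    simpa [← hS, Finset.disjoint_image hγ] using hYdisj hji.symm
  have hcard : 2 * (S i).card ≤ d := by
    have := hYcard i
    rw [← hS, Finset.card_image_of_injective _ hγ] at this
    omega
  obtain ⟨x, hx⟩ := hYhull
  rw [Set.mem_iInter] at hx
  exact Set.disjoint_left.mp (disjoint_convexHull_momentCurve hdisj hcard)
    (by simpa [← hS] using hx i) (by simpa [← hS] using hx j)

/-- If `(d₁, …, d_r)` is affinely Tverberg prescribable for `r` and `d`,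
then `dᵢ ≥ ⌊d/2⌋` for all `i`. -/
theorem affinely_prescribable_lower_bound (r d : ℕ) (hr : 2 ≤ r) (hd : 1 ≤ d)
    (D : Fin r → ℕ) (h : AffinelyTverbergPrescribable r d D) :
    ∀ i, d / 2 ≤ D i :=
  affinely_prescribable_lower_bound_general r d hr D h
end

section
/- Let r ≥ 2 and d ≥ 1 be integers and let n be an integer with n ≥ (r−1)d. For every family of points p : {0,…,n} × {1,…,r} → ℝ^d there exist weights λ : {0,…,n} → ℝ with λ ≥ 0 and ∑_i λ_i = 1, and functions g_1, …, g_r : {0,…,n} → {1,…,r} such that: (a) for every i with λ_i ≠ 0 the values g_1(i), g_2(i), …, g_r(i) are pairwise distinct; and (b) the r points ∑_{i=0}^{n} λ_i · p(i, g_k(i)) ∈ ℝ^d, for k = 1, …, r, are all equal. -/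
/-!
Take `G = ZMod r` (as `Fin r`) and, for each `i` and color `c ∈ G`, the vector
`v i c := (p i (a + c) - p i c)_{a ≠ 0}` in `(Fin d → ℝ)^{G ∖ 0}`, a space of dimension
`(r - 1) d < n + 1`.
Translation permutes `G`, so `∑_c v i c = 0` and `0` lies in the convex hull of every color class.
By Bárány's colorful Carathéodory theorem some colorful convex combination `∑ λᵢ v i (cᵢ)`
vanishes, i.e. the `r` points `∑ λᵢ p i (a + cᵢ)`, `a ∈ G`, coincide; the colorings
`gₐ i = a + cᵢ` are pairwise distinct in every coordinate.

Colorful Carathéodory follows from Bárány's minimal-norm argument. Let `z` have least norm on the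
union of all colorful hulls, say `z ∈ conv {v i (c₀ i)}`, and suppose `z ≠ 0`. Minimality gives
`⟪z, x⟫ ≥ ‖z‖²` on that hull, so the affinely independent Carathéodory support of `z` lies on the
hyperplane `⟪z, x⟫ = ‖z‖²` and has at most `dim < #ι` points: some color class `j` is unused.
Recoloring `j` by a point `x` of its class with `⟪z, x⟫ ≤ 0` gives a colorful hull that still
contains `z` but violates `⟪z, x⟫ ≥ ‖z‖²`.
-/

open Finset Set

section ConvexHull

variable {R E : Type*} [Field R] [LinearOrder R] [IsStrictOrderedRing R] [AddCommGroup E]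
  [Module R E] {ι : Type*} [Fintype ι]

theorem mem_convexHull_range_iff_exists_sum {f : ι → E} {x : E} :
    x ∈ convexHull R (range f) ↔
      ∃ w : ι → R, (∀ i, 0 ≤ w i) ∧ ∑ i, w i = 1 ∧ ∑ i, w i • f i = x := by
  classical
  constructor
  · intro hx
    have hrange : range f = Fintype.linearCombination R f '' range fun i => Pi.single i 1 := by
      rw [← range_comp]; congr 1; funext i; simp [Fintype.linearCombination_apply_single]
    rw [hrange, ← LinearMap.image_convexHull, convexHull_rangle_single_eq_stdSimplex] at hx
    obtain ⟨w, ⟨hw₀, hw₁⟩, rfl⟩ := hx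
    exact ⟨w, hw₀, hw₁, rfl⟩
  · rintro ⟨w, hw₀, hw₁, rfl⟩
    exact mem_convexHull_of_exists_fintype w f hw₀ hw₁ (fun i => ⟨i, rfl⟩) rfl

theorem zero_mem_convexHull_range_of_sum_eq_zero [Nonempty ι] {f : ι → E} (hf : ∑ i, f i = 0) :
    0 ∈ convexHull R (range f) := by
  refine mem_convexHull_range_iff_exists_sum.2
    ⟨fun _ => (Fintype.card ι : R)⁻¹, fun _ => by positivity, ?_, ?_⟩
  · simp
  · rw [← smul_sum, hf, smul_zero]

end ConvexHull

theorem exists_range_subset_image_compl_singleton {α ι β : Type*} [Fintype α] [Fintype ι]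
    {f : α → β} {g : ι → β} (hg : range g ⊆ range f) (hcard : Fintype.card ι < Fintype.card α) :
    ∃ j, range g ⊆ f '' {j}ᶜ := by
  classical
  choose pick hpick using fun a => hg ⟨a, rfl⟩
  have hlt : #(univ.image pick) < #(univ : Finset α) :=
    card_image_le.trans_lt (by simpa only [card_univ] using hcard)
  obtain ⟨j, -, hj⟩ := exists_mem_notMem_of_card_lt_card hlt
  refine ⟨j, ?_⟩
  rintro _ ⟨a, rfl⟩
  exact ⟨pick a, fun h => hj (mem_image.2 ⟨a, mem_univ _, h⟩), hpick a⟩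

section Hyperplane

variable {k V ι : Type*} [Field k] [AddCommGroup V] [Module k V] [FiniteDimensional k V]
  [Fintype ι]

theorem AffineIndependent.card_le_finrank_of_map_eq {f : ι → V} (hf : AffineIndependent k f)
    (l : V →ₗ[k] k) {a : k} (ha : a ≠ 0) (hl : ∀ i, l (f i) = a) :
    Fintype.card ι ≤ Module.finrank k V := by
  rcases isEmpty_or_nonempty ι with hι | ⟨⟨i⟩⟩
  · simp
  have hpos : 0 < Fintype.card ι := Fintype.card_pos_iff.2 ⟨i⟩
  have hspan : vectorSpan k (range f) ≤ LinearMap.ker l := by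
    rw [vectorSpan_def, Submodule.span_le]
    rintro _ ⟨_, ⟨i, rfl⟩, _, ⟨j, rfl⟩, rfl⟩
    simp [hl]
  have hker : LinearMap.ker l ≠ ⊤ := fun h =>
    ha (hl i ▸ LinearMap.mem_ker.1 (h ▸ Submodule.mem_top))
  have hrank := hf.finrank_vectorSpan (n := Fintype.card ι - 1) (by omega)
  have hmono := Submodule.finrank_mono hspan
  have hlt := Submodule.finrank_lt hker
  omega

end Hyperplane

section InnerProductSpace

variable {F : Type*} [NormedAddCommGroup F] [InnerProductSpace ℝ F]

theorem Convex.norm_sq_le_inner_of_isMinOn {K : Set F} (hK : Convex ℝ K) {z x : F} (hz : z ∈ K)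
    (hmin : IsMinOn (‖·‖) K z) (hx : x ∈ K) : ‖z‖ ^ 2 ≤ inner ℝ z x := by
  have : Nonempty K := ⟨⟨z, hz⟩⟩
  have hinf : ‖0 - z‖ = ⨅ w : K, ‖0 - (w : F)‖ :=
    le_antisymm (le_ciInf fun w => by simpa using hmin w.2)
      (ciInf_le (f := fun w : K => ‖0 - (w : F)‖) ⟨0, forall_mem_range.2 fun _ => norm_nonneg _⟩
        ⟨z, hz⟩)
  have h := (norm_eq_iInf_iff_real_inner_le_zero hK hz).1 hinf x hx
  rw [zero_sub, inner_neg_left, inner_sub_right, real_inner_self_eq_norm_sq] at h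
  linarith

theorem exists_inner_nonpos_of_zero_mem_convexHull {s : Set F} (h : 0 ∈ convexHull ℝ s) (z : F) :
    ∃ x ∈ s, inner ℝ z x ≤ 0 := by
  by_contra! hs
  have h₀ : 0 < inner ℝ z (0 : F) :=
    convexHull_min (t := {x | 0 < inner ℝ z x}) hs
      (convex_halfSpace_gt (innerSL ℝ z).toLinearMap.isLinear 0) h
  simp at h₀

end InnerProductSpace

section Colorful

variable {ι κ E : Type*} [AddCommGroup E] [Module ℝ E]

def colorfulHull (v : ι → κ → E) (c : ι → κ) : Set E :=
  convexHull ℝ (range fun i => v i (c i))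

theorem LinearMap.image_colorfulHull {F : Type*} [AddCommGroup F] [Module ℝ F] (L : E →ₗ[ℝ] F)
    (v : ι → κ → E) (c : ι → κ) :
    L '' colorfulHull v c = colorfulHull (fun i k => L (v i k)) c := by
  rw [colorfulHull, L.image_convexHull, ← Set.range_comp]
  rfl

section InnerProductSpace

variable {F : Type*} [NormedAddCommGroup F] [InnerProductSpace ℝ F] [FiniteDimensional ℝ F]
  [Fintype ι]

theorem eq_zero_of_isMinOn_iUnion_colorfulHull {v : ι → κ → F}
    (hdim : Module.finrank ℝ F < Fintype.card ι) (hv : ∀ i, 0 ∈ convexHull ℝ (range (v i)))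
    {z : F} {c₀ : ι → κ} (hz : z ∈ colorfulHull v c₀)
    (hmin : IsMinOn (‖·‖) (⋃ c, colorfulHull v c) z) : z = 0 := by
  classical
  by_contra hz₀
  have hzpos : 0 < ‖z‖ ^ 2 := by positivity
  have hvar : ∀ c, z ∈ colorfulHull v c → ∀ x ∈ colorfulHull v c, ‖z‖ ^ 2 ≤ inner ℝ z x :=
    fun c hzc x hx => (convex_convexHull ℝ _).norm_sq_le_inner_of_isMinOn hzc
      (hmin.on_subset (subset_iUnion (colorfulHull v) c)) hx
  obtain ⟨α, _, y, w, hy, hyind, hw₀, hw₁, hwy⟩ := eq_pos_convex_span_of_mem_convexHull hz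
  have hyz : ∀ a, inner ℝ z (y a) = ‖z‖ ^ 2 := by
    have hle : ∀ a ∈ Finset.univ, w a * ‖z‖ ^ 2 ≤ w a * inner ℝ z (y a) := fun a _ =>
      mul_le_mul_of_nonneg_left (hvar c₀ hz _ (subset_convexHull ℝ _ (hy ⟨a, rfl⟩))) (hw₀ a).le
    have hsum : ∑ a, w a * ‖z‖ ^ 2 = ∑ a, w a * inner ℝ z (y a) := calc
      _ = inner ℝ z z := by rw [← sum_mul, hw₁, one_mul, real_inner_self_eq_norm_sq]
      _ = inner ℝ z (∑ a, w a • y a) := by rw [hwy]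
      _ = _ := by simp only [inner_sum, real_inner_smul_right]
    intro a
    exact (mul_left_cancel₀ (hw₀ a).ne'
      ((sum_eq_sum_iff_of_le hle).1 hsum a (Finset.mem_univ a))).symm
  have hcard := hyind.card_le_finrank_of_map_eq (innerSL ℝ z).toLinearMap hzpos.ne' hyz
  obtain ⟨j, hj⟩ := exists_range_subset_image_compl_singleton hy (hcard.trans_lt hdim)
  obtain ⟨_, ⟨k, rfl⟩, hk⟩ := exists_inner_nonpos_of_zero_mem_convexHull (hv j) z
  have hzy : z ∈ convexHull ℝ (range y) := hwy ▸ (convex_convexHull ℝ _).sum_mem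
    (fun a _ => (hw₀ a).le) hw₁ (fun a _ => subset_convexHull ℝ _ ⟨a, rfl⟩)
  have hzc : z ∈ colorfulHull v (Function.update c₀ j k) := by
    refine convexHull_mono (hj.trans ?_) hzy
    rintro _ ⟨i, hi, rfl⟩
    exact ⟨i, by simp [Function.update_of_ne hi]⟩
  have := hvar _ hzc (v j k) (subset_convexHull ℝ _ ⟨j, by simp⟩)
  linarith

theorem InnerProductSpace.exists_zero_mem_colorfulHull [Finite κ] {v : ι → κ → F}
    (hdim : Module.finrank ℝ F < Fintype.card ι) (hv : ∀ i, 0 ∈ convexHull ℝ (range (v i))) :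
    ∃ c, 0 ∈ colorfulHull v c := by
  obtain ⟨i₀⟩ := Fintype.card_pos_iff.1 ((Nat.zero_le _).trans_lt hdim)
  obtain ⟨k₀⟩ := range_nonempty_iff_nonempty.1 (convexHull_nonempty_iff.1 ⟨0, hv i₀⟩)
  have hne : (⋃ c, colorfulHull v c).Nonempty :=
    ⟨v i₀ k₀, mem_iUnion.2 ⟨fun _ => k₀, subset_convexHull ℝ _ ⟨i₀, rfl⟩⟩⟩
  have hcompact : IsCompact (⋃ c, colorfulHull v c) :=
    isCompact_iUnion fun c => (finite_range _).isCompact_convexHull ℝ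
  obtain ⟨z, hz, hmin⟩ := hcompact.exists_isMinOn hne continuous_norm.continuousOn
  obtain ⟨c, hzc⟩ := mem_iUnion.1 hz
  exact ⟨c, eq_zero_of_isMinOn_iUnion_colorfulHull hdim hv hzc hmin ▸ hzc⟩

end InnerProductSpace

/-- **Bárány's colorful Carathéodory theorem**. -/
theorem exists_zero_mem_colorfulHull [FiniteDimensional ℝ E] [Fintype ι] [Finite κ]
    {v : ι → κ → E} (hdim : Module.finrank ℝ E < Fintype.card ι)
    (hv : ∀ i, 0 ∈ convexHull ℝ (range (v i))) : ∃ c, 0 ∈ colorfulHull v c := by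
  let e : E ≃ₗ[ℝ] EuclideanSpace ℝ (Fin (Module.finrank ℝ E)) :=
    LinearEquiv.ofFinrankEq _ _ (by simp)
  let L := e.toLinearMap
  have hLv : ∀ i, 0 ∈ convexHull ℝ (range fun k => L (v i k)) := fun i => by
    rw [Set.range_comp' L, ← L.image_convexHull]
    exact ⟨0, hv i, map_zero L⟩
  obtain ⟨c, hc⟩ := InnerProductSpace.exists_zero_mem_colorfulHull (by simpa using hdim) hLv
  rw [← L.image_colorfulHull] at hc
  obtain ⟨x, hx, hLx⟩ := hc
  exact ⟨c, e.injective (hLx.trans (map_zero e).symm) ▸ hx⟩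

end Colorful

theorem exists_convex_weights_sum_smul_add_eq {G V ι : Type*} [AddGroup G] [Fintype G]
    [AddCommGroup V] [Module ℝ V] [FiniteDimensional ℝ V] [Fintype ι]
    (hdim : (Fintype.card G - 1) * Module.finrank ℝ V < Fintype.card ι) (p : ι → G → V) :
    ∃ (w : ι → ℝ) (c : ι → G), (∀ i, 0 ≤ w i) ∧ ∑ i, w i = 1 ∧
      ∀ a, ∑ i, w i • p i (a + c i) = ∑ i, w i • p i (c i) := by
  classical
  let v : ι → G → ({a : G // a ≠ 0} → V) := fun i c a => p i (a + c) - p i c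
  have hv : ∀ i, 0 ∈ convexHull ℝ (range (v i)) := fun i =>
    zero_mem_convexHull_range_of_sum_eq_zero <| funext fun a => by
      simpa [v, sum_sub_distrib, sub_eq_zero] using Equiv.sum_comp (Equiv.addLeft (a : G)) (p i)
  obtain ⟨c, hc⟩ :=
    exists_zero_mem_colorfulHull (by simpa [Module.finrank_pi_fintype] using hdim) hv
  obtain ⟨w, hw₀, hw₁, hwv⟩ := mem_convexHull_range_iff_exists_sum.1 hc
  refine ⟨w, c, hw₀, hw₁, fun a => ?_⟩
  rcases eq_or_ne a 0 with rfl | ha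
  · simp
  simpa [v, smul_sub, sum_sub_distrib, sub_eq_zero] using congr_fun hwv ⟨a, ha⟩

theorem soberon_equal_barycentric_general (r d n : ℕ) (hr : 2 ≤ r)
    (hn : (r - 1) * d ≤ n) (p : Fin (n + 1) → Fin r → (Fin d → ℝ)) :
    ∃ lam : Fin (n + 1) → ℝ, (∀ i, 0 ≤ lam i) ∧ (∑ i, lam i = 1) ∧
      ∃ g : Fin r → Fin (n + 1) → Fin r,
        (∀ i, lam i ≠ 0 → Function.Injective fun k => g k i) ∧
        (∀ k l : Fin r, ∑ i, lam i • p i (g k i) = ∑ i, lam i • p i (g l i)) := by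
  have : NeZero r := ⟨by omega⟩
  obtain ⟨w, c, hw₀, hw₁, hshift⟩ := exists_convex_weights_sum_smul_add_eq (by simp; omega) p
  exact ⟨w, hw₀, hw₁, fun k i => k + c i, fun i _ => add_left_injective (c i),
    fun k l => (hshift k).trans (hshift l).symm⟩

/-- Soberón's theorem (orbit form): for `r ≥ 2`, `d ≥ 1`, `n ≥ (r-1)d`, and any affine map
from `[r]^{*(n+1)}` to `ℝ^d` (encoded by the images `p i j` of its vertices) there exist
barycentric coordinates `λ` and color choices `g₁, …, g_r` that are pairwise distinct in every
coordinate of the support of `λ`, such that the corresponding `r` points of `[r]^{*(n+1)}`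
(which lie in pairwise disjoint faces and have equal barycentric coordinates) are mapped to a
common point. -/
theorem soberon_equal_barycentric (r d n : ℕ) (hr : 2 ≤ r) (hd : 1 ≤ d)
    (hn : (r - 1) * d ≤ n) (p : Fin (n + 1) → Fin r → (Fin d → ℝ)) :
    ∃ lam : Fin (n + 1) → ℝ, (∀ i, 0 ≤ lam i) ∧ (∑ i, lam i = 1) ∧
      ∃ g : Fin r → Fin (n + 1) → Fin r,
        (∀ i, lam i ≠ 0 → Function.Injective fun k => g k i) ∧
        (∀ k l : Fin r, ∑ i, lam i • p i (g k i) = ∑ i, lam i • p i (g l i)) :=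
  soberon_equal_barycentric_general r d n hr hn p
end

section
/- Let r ≥ 2 and d ≥ 1 be integers and let n be an integer with n ≥ (r−1)d. For every family of points p : {0,…,n} × (ℤ/rℤ) → ℝ^d there exist weights λ : {0,…,n} → ℝ with λ ≥ 0 and ∑_i λ_i = 1, and a function g : {0,…,n} → ℤ/rℤ such that for all s, t ∈ ℤ/rℤ, ∑_{i=0}^{n} λ_i · p(i, g(i)+s) = ∑_{i=0}^{n} λ_i · p(i, g(i)+t). That is, every affine map [r]^{*(n+1)} → ℝ^d collapses some ℤ/r-orbit of [r]^{*(n+1)} to a single point. -/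
/-!
The statement reduces to Bárány's colorful Carathéodory theorem. Replace the
point `p i j` by its displacement vector `(p i (j + s) - p i j)_{s ≠ 0}` in `(ℝ^d)^{r-1}`; an
orbit is collapsed exactly when a convex combination of one displacement vector per `i`
vanishes. For fixed `i` the displacement vectors sum to zero, so each color class contains `0`
in its convex hull, and `n + 1 > (r - 1) d` colors are enough for a colorful selection whose
convex hull contains `0`.

For colorful Carathéodory, take a point `x` of least norm in the union of the convex hulls of
all colorful selections, lying in the hull of the selection `σ`. If `x ≠ 0`, every point of
that hull satisfies `⟪x, y⟫ ≥ ‖x‖²`, so `x` is a positive combination of affinely independent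
points of `σ` on the hyperplane `⟪x, y⟫ = ‖x‖²`; there are at most `dim E` of them, so some
color `i₀` is not used. Swapping in a point of color `i₀` with `⟪x, y⟫ ≤ 0` gives a colorful
hull containing both `x` and that point, contradicting the minimality of `‖x‖`.
-/

open Finset Module

theorem AffineIndependent.card_le_finrank_of_forall_apply_eq {k V τ : Type*} [Field k]
    [AddCommGroup V] [Module k V] [FiniteDimensional k V] [Fintype τ] {z : τ → V}
    (hz : AffineIndependent k z) {φ : Dual k V} (hφ : φ ≠ 0) {c : k}
    (hc : ∀ j, φ (z j) = c) : Fintype.card τ ≤ finrank k V := by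
  rcases Nat.eq_zero_or_pos (Fintype.card τ) with h | h
  · omega
  obtain ⟨m, hm⟩ := Nat.exists_eq_succ_of_ne_zero h.ne'
  obtain ⟨j₀⟩ := Fintype.card_pos_iff.1 h
  have hspan : vectorSpan k (Set.range z) ≤ LinearMap.ker φ := by
    rw [vectorSpan_range_eq_span_range_vsub_right k z j₀, Submodule.span_le]
    rintro _ ⟨j, rfl⟩
    simp [hc]
  have := Submodule.finrank_mono hspan
  rw [hz.finrank_vectorSpan hm] at this
  have := Dual.finrank_ker_add_one_of_ne_zero hφ
  omega

theorem LinearMap.map_mem_convexHull_range {𝕜 E F ι : Type*} [Field 𝕜] [LinearOrder 𝕜]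
    [IsStrictOrderedRing 𝕜] [AddCommGroup E] [Module 𝕜 E] [AddCommGroup F] [Module 𝕜 F]
    (f : E →ₗ[𝕜] F) {u : ι → E} {x : E} (hx : x ∈ convexHull 𝕜 (Set.range u)) :
    f x ∈ convexHull 𝕜 (Set.range (f ∘ u)) := by
  rw [Set.range_comp, ← f.image_convexHull]
  exact Set.mem_image_of_mem f hx

theorem exists_weights_of_mem_convexHull_range {𝕜 E ι : Type*} [Field 𝕜] [LinearOrder 𝕜]
    [IsStrictOrderedRing 𝕜] [AddCommGroup E] [Module 𝕜 E] [Fintype ι] {v : ι → E} {x : E}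
    (hx : x ∈ convexHull 𝕜 (Set.range v)) :
    ∃ w : ι → 𝕜, (∀ i, 0 ≤ w i) ∧ ∑ i, w i = 1 ∧ ∑ i, w i • v i = x := by
  rw [convexHull_range_eq_exists_affineCombination] at hx
  obtain ⟨s, w, hw₀, hw₁, rfl⟩ := hx
  refine ⟨Set.indicator s w, fun i ↦ Set.indicator_nonneg hw₀ i, ?_, ?_⟩
  · rwa [sum_indicator_subset _ s.subset_univ]
  · rw [s.affineCombination_eq_linear_combination v w hw₁]
    simp_rw [← Set.indicator_smul_apply_left]
    exact sum_indicator_subset _ s.subset_univ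

theorem exists_mem_apply_nonpos_of_zero_mem_convexHull {𝕜 E : Type*} [Field 𝕜] [LinearOrder 𝕜]
    [IsStrictOrderedRing 𝕜] [AddCommGroup E] [Module 𝕜 E] (φ : E →ₗ[𝕜] 𝕜) {s : Set E}
    (hs : (0 : E) ∈ convexHull 𝕜 s) : ∃ y ∈ s, φ y ≤ 0 := by
  by_contra! h
  have h0 : (0 : E) ∈ {y | 0 < φ y} := convexHull_min h (convex_halfSpace_gt φ.isLinear 0) hs
  rw [Set.mem_ofPred_eq, map_zero] at h0
  exact lt_irrefl 0 h0

theorem eq_of_sum_mul_eq_of_le {τ : Type*} [Fintype τ] {w a : τ → ℝ} {c : ℝ}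
    (hw : ∀ j, 0 < w j) (hw₁ : ∑ j, w j = 1) (ha : ∀ j, c ≤ a j) (hsum : ∑ j, w j * a j = c)
    (j : τ) : a j = c := by
  have hzero : ∑ j, w j * (a j - c) = 0 := by
    simp only [mul_sub, sum_sub_distrib, ← sum_mul, hw₁, hsum, one_mul, sub_self]
  have := (sum_eq_zero_iff_of_nonneg fun j _ ↦ mul_nonneg (hw j).le (sub_nonneg.2 (ha j))).1
    hzero j (mem_univ j)
  rcases mul_eq_zero.1 this with h | h
  · exact absurd h (hw j).ne'
  · linarith

section InnerProductSpace

variable {E : Type*} [NormedAddCommGroup E] [InnerProductSpace ℝ E]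

theorem IsMinOn.norm_sq_le_inner {K : Set E} (hK : Convex ℝ K) {x y : E} (hx : x ∈ K)
    (hmin : IsMinOn norm K x) (hy : y ∈ K) : ‖x‖ ^ 2 ≤ inner ℝ x y := by
  have : Nonempty K := ⟨⟨x, hx⟩⟩
  have hinf : ‖(0 : E) - x‖ = ⨅ w : K, ‖(0 : E) - w‖ := by
    simp only [zero_sub, norm_neg]
    exact le_antisymm (le_ciInf fun w ↦ isMinOn_iff.1 hmin w w.2)
      (ciInf_le (f := fun w : K ↦ ‖(w : E)‖) ⟨0, by rintro _ ⟨w, rfl⟩; positivity⟩ ⟨x, hx⟩)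
  have := (norm_eq_iInf_iff_real_inner_le_zero hK hx).1 hinf y hy
  rw [zero_sub, inner_neg_left, inner_sub_right, real_inner_self_eq_norm_sq] at this
  linarith

theorem exists_mem_convexHull_image_compl_of_norm_sq_le_inner [FiniteDimensional ℝ E]
    {ι : Type*} [Fintype ι] {u : ι → E} (hcard : finrank ℝ E < Fintype.card ι) {x : E}
    (hx : x ≠ 0) (hxu : x ∈ convexHull ℝ (Set.range u)) (hu : ∀ i, ‖x‖ ^ 2 ≤ inner ℝ x (u i)) :
    ∃ i₀, x ∈ convexHull ℝ (u '' {i₀}ᶜ) := by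
  obtain ⟨τ, _, z, w, hzu, hz, hw₀, hw₁, hwx⟩ := eq_pos_convex_span_of_mem_convexHull hxu
  choose c hc using fun j ↦ hzu (Set.mem_range_self j)
  have hz_on : ∀ j, inner ℝ x (z j) = ‖x‖ ^ 2 := by
    refine eq_of_sum_mul_eq_of_le hw₀ hw₁ (fun j ↦ hc j ▸ hu (c j)) ?_
    simp_rw [← real_inner_smul_right, ← inner_sum, hwx, real_inner_self_eq_norm_sq]
  have hτ : Fintype.card τ < Fintype.card ι := by
    refine (hz.card_le_finrank_of_forall_apply_eq (φ := innerₗ E x) ?_ hz_on).trans_lt hcard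
    intro h
    exact hx (inner_self_eq_zero.1 (LinearMap.congr_fun h x))
  obtain ⟨i₀, hi₀⟩ : ∃ i₀, ∀ j, c j ≠ i₀ := by
    by_contra! h
    exact hτ.not_ge (Fintype.card_le_of_surjective c h)
  refine ⟨i₀, convexHull_mono ?_ (mem_convexHull_of_exists_fintype w z (fun j ↦ (hw₀ j).le) hw₁
    Set.mem_range_self hwx)⟩
  rintro _ ⟨j, rfl⟩
  exact ⟨c j, hi₀ j, hc j⟩

theorem colorful_caratheodory_of_innerProductSpace [FiniteDimensional ℝ E] {ι : Type*}
    [Fintype ι] {κ : ι → Type*} [∀ i, Finite (κ i)] (v : ∀ i, κ i → E)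
    (hcard : finrank ℝ E < Fintype.card ι) (hv : ∀ i, (0 : E) ∈ convexHull ℝ (Set.range (v i))) :
    ∃ σ : ∀ i, κ i, (0 : E) ∈ convexHull ℝ (Set.range fun i ↦ v i (σ i)) := by
  classical
  set K : (∀ i, κ i) → Set E := fun σ ↦ convexHull ℝ (Set.range fun i ↦ v i (σ i))
  have : Nonempty ι := Fintype.card_pos_iff.1 (by omega)
  have : ∀ i, Nonempty (κ i) := fun i ↦
    Set.range_nonempty_iff_nonempty.1 (convexHull_nonempty_iff.1 ⟨0, hv i⟩)
  obtain ⟨x, hxU, hmin⟩ := (isCompact_iUnion fun σ : ∀ i, κ i ↦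
    (Set.finite_range fun i ↦ v i (σ i)).isCompact_convexHull (𝕜 := ℝ)).exists_isMinOn
      (Set.nonempty_iUnion.2 ⟨Classical.arbitrary _, (Set.range_nonempty _).convexHull⟩)
      continuous_norm.continuousOn
  have hge : ∀ σ, x ∈ K σ → ∀ y ∈ K σ, ‖x‖ ^ 2 ≤ inner ℝ x y := fun σ hxσ _ hy ↦
    (hmin.on_subset (Set.subset_iUnion K σ)).norm_sq_le_inner (convex_convexHull ℝ _) hxσ hy
  obtain ⟨σ, hxσ⟩ := Set.mem_iUnion.1 hxU
  suffices hx : x = 0 from ⟨σ, hx ▸ hxσ⟩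
  by_contra hx
  obtain ⟨i₀, hi₀⟩ := exists_mem_convexHull_image_compl_of_norm_sq_le_inner hcard hx hxσ
    fun i ↦ hge σ hxσ _ (subset_convexHull ℝ _ (Set.mem_range_self i))
  obtain ⟨_, ⟨k, rfl⟩, hk⟩ := exists_mem_apply_nonpos_of_zero_mem_convexHull (innerₗ E x) (hv i₀)
  set σ' := Function.update σ i₀ k
  have hxσ' : x ∈ K σ' := by
    refine convexHull_mono ?_ hi₀
    rintro _ ⟨i, hi, rfl⟩
    exact ⟨i, by simp [σ', Function.update_of_ne hi]⟩
  have hkσ' : v i₀ k ∈ K σ' := subset_convexHull ℝ _ ⟨i₀, by simp [σ']⟩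
  have : ‖x‖ ^ 2 ≤ 0 := (hge σ' hxσ' _ hkσ').trans hk
  exact hx (by simpa using le_antisymm this (sq_nonneg _))

end InnerProductSpace

theorem colorful_caratheodory {E : Type*} [AddCommGroup E] [Module ℝ E] [FiniteDimensional ℝ E]
    {ι : Type*} [Fintype ι] {κ : ι → Type*} [∀ i, Finite (κ i)] (v : ∀ i, κ i → E)
    (hcard : finrank ℝ E < Fintype.card ι) (hv : ∀ i, (0 : E) ∈ convexHull ℝ (Set.range (v i))) :
    ∃ σ : ∀ i, κ i, (0 : E) ∈ convexHull ℝ (Set.range fun i ↦ v i (σ i)) := by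
  let e : E ≃ₗ[ℝ] EuclideanSpace ℝ (Fin (finrank ℝ E)) := LinearEquiv.ofFinrankEq _ _ (by simp)
  obtain ⟨σ, hσ⟩ := colorful_caratheodory_of_innerProductSpace (fun i ↦ e ∘ v i) (by simpa)
    fun i ↦ by simpa using e.toLinearMap.map_mem_convexHull_range (hv i)
  exact ⟨σ, by simpa [Function.comp_def] using e.symm.toLinearMap.map_mem_convexHull_range hσ⟩

section OrbitCollapse

variable {G V : Type*} [AddGroup G] [Fintype G] [AddCommGroup V]

def orbitDisplacement (q : G → V) (j : G) : {s : G // s ≠ 0} → V := fun s ↦ q (j + s) - q j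

theorem sum_orbitDisplacement (q : G → V) : ∑ j, orbitDisplacement q j = 0 := by
  funext s
  simp only [orbitDisplacement, Finset.sum_apply, sum_sub_distrib, Pi.zero_apply, sub_eq_zero]
  exact Fintype.sum_equiv (Equiv.addRight s.1) _ _ fun _ ↦ rfl

theorem zero_mem_convexHull_range_orbitDisplacement [Module ℝ V] (q : G → V) :
    (0 : {s : G // s ≠ 0} → V) ∈ convexHull ℝ (Set.range (orbitDisplacement q)) :=
  mem_convexHull_of_exists_fintype (fun _ ↦ (Fintype.card G : ℝ)⁻¹) _ (fun _ ↦ by positivity)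
    (by simp) (fun j ↦ ⟨j, rfl⟩) (by rw [← smul_sum, sum_orbitDisplacement, smul_zero])

theorem finrank_pi_subtype_ne_zero [Module ℝ V] [FiniteDimensional ℝ V] :
    finrank ℝ ({s : G // s ≠ 0} → V) = (Fintype.card G - 1) * finrank ℝ V := by
  classical
  rw [finrank_pi_fintype, sum_const, card_univ, smul_eq_mul, Fintype.card_subtype_compl,
    Fintype.card_subtype_eq]

theorem exists_orbit_collapse [Module ℝ V] [FiniteDimensional ℝ V] {ι : Type*} [Fintype ι]
    (hcard : (Fintype.card G - 1) * finrank ℝ V < Fintype.card ι) (p : ι → G → V) :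
    ∃ lam : ι → ℝ, (∀ i, 0 ≤ lam i) ∧ ∑ i, lam i = 1 ∧ ∃ g : ι → G,
      ∀ s t, ∑ i, lam i • p i (g i + s) = ∑ i, lam i • p i (g i + t) := by
  obtain ⟨g, hg⟩ := colorful_caratheodory (fun i ↦ orbitDisplacement (p i))
    (by rwa [finrank_pi_subtype_ne_zero])
    fun i ↦ zero_mem_convexHull_range_orbitDisplacement (p i)
  obtain ⟨lam, hlam₀, hlam₁, hsum⟩ := exists_weights_of_mem_convexHull_range hg
  have hshift : ∀ s, ∑ i, lam i • p i (g i + s) = ∑ i, lam i • p i (g i) := by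
    intro s
    rcases eq_or_ne s 0 with rfl | hs
    · simp
    · simpa [orbitDisplacement, Finset.sum_apply, smul_sub, sum_sub_distrib, sub_eq_zero] using
        congrFun hsum ⟨s, hs⟩
  exact ⟨lam, hlam₀, hlam₁, g, fun s t ↦ (hshift s).trans (hshift t).symm⟩

end OrbitCollapse

theorem affine_orbit_collapse_general (r d n : ℕ) (hr : 2 ≤ r)
    (hn : (r - 1) * d ≤ n) (p : Fin (n + 1) → ZMod r → (Fin d → ℝ)) :
    ∃ lam : Fin (n + 1) → ℝ, (∀ i, 0 ≤ lam i) ∧ (∑ i, lam i = 1) ∧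
      ∃ g : Fin (n + 1) → ZMod r,
        ∀ s t : ZMod r, ∑ i, lam i • p i (g i + s) = ∑ i, lam i • p i (g i + t) := by
  have : NeZero r := ⟨by omega⟩
  exact exists_orbit_collapse (by simpa [ZMod.card] using Nat.lt_succ_of_le hn) p

/-- Affine orbit collapsing: for `r ≥ 2`, `d ≥ 1`, `n ≥ (r-1)d`, every affine map
`[r]^{*(n+1)} → ℝ^d` (encoded by the images `p i j` of its vertices, colors in `ℤ/r`)
collapses some `ℤ/r`-orbit to a single point: there are barycentric coordinates `λ` and a
color choice `g` such that all shifts `g + t`, `t ∈ ℤ/r`, are mapped to the same point. -/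
theorem affine_orbit_collapse (r d n : ℕ) (hr : 2 ≤ r) (hd : 1 ≤ d)
    (hn : (r - 1) * d ≤ n) (p : Fin (n + 1) → ZMod r → (Fin d → ℝ)) :
    ∃ lam : Fin (n + 1) → ℝ, (∀ i, 0 ≤ lam i) ∧ (∑ i, lam i = 1) ∧
      ∃ g : Fin (n + 1) → ZMod r,
        ∀ s t : ZMod r, ∑ i, lam i • p i (g i + s) = ∑ i, lam i • p i (g i + t) :=
  affine_orbit_collapse_general r d n hr hn p
end
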